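/- arXiv:1312.1126 — 9 statements merged into one kernel-verified Lean document; each statement's English description precedes it below -/
import Mathlib

section
/- Let n ≥ 1 and for x ∈ ℤⁿ let Δ_n(x) = ∏_{1≤i<j≤n}(x_j − x_i) be the Vandermonde determinant. Then Δ_n is harmonic for the generator of n independent one-sided random walks: for every x ∈ ℤⁿ, ∑_{i=1}^n (Δ_n(x + e_i) − Δ_n(x)) = 0, equivalently ∑_{i=1}^n Δ_n(x + e_i) = n · Δ_n(x), where e_i ∈ ℤⁿ is the i-th standard basis vector. -/
/-!
Write `Δ_n(x) = det V(x)` with `V(x)ᵢⱼ = xᵢ ^ j`. The `i`-th row `((xᵢ + 1) ^ j)ⱼ` of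
`V(x + eᵢ)` is the `i`-th row of `V(x) P`, where `Pₖⱼ = (j choose k)` is the Pascal matrix.
Expanding each determinant along its modified row by cofactors,
`∑ᵢ det (V with row i replaced by (V P)ᵢ) = tr (V P adj V) = det V · tr P`, and `tr P = n`
since `P` is unitriangular.
-/

open Finset Matrix

/-- The Vandermonde determinant `Δ_n(x) = ∏_{1 ≤ i < j ≤ n} (x_j - x_i)` of an integer vector. -/
def vandermondeProd {n : ℕ} (x : Fin n → ℤ) : ℤ :=
  ∏ p ∈ Finset.univ.filter (fun p : Fin n × Fin n => p.1 < p.2), (x p.2 - x p.1)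

namespace Matrix

theorem sum_det_updateRow_mul {ι R : Type*} [Fintype ι] [DecidableEq ι] [CommRing R]
    (A B : Matrix ι ι R) : ∑ i, (A.updateRow i ((A * B) i)).det = A.det * B.trace := by
  calc ∑ i, (A.updateRow i ((A * B) i)).det
      = ∑ i, ∑ j, (A * B) i j * adjugate A j i := by
        refine sum_congr rfl fun i _ => ?_
        rw [← cramer_transpose_apply, cramer_eq_adjugate_mulVec, ← adjugate_transpose]
        simp only [mulVec, dotProduct, transpose_apply, mul_comm]
    _ = (A * B * adjugate A).trace := by simp only [trace, diag_apply, mul_apply]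
    _ = (B * (adjugate A * A)).trace := by rw [Matrix.mul_assoc, trace_mul_comm, Matrix.mul_assoc]
    _ = A.det * B.trace := by
        rw [adjugate_mul, Matrix.mul_smul, Matrix.mul_one, trace_smul, smul_eq_mul]

section Pascal

variable {n : ℕ} {R : Type*} [CommRing R]

def pascal (n : ℕ) (R : Type*) [Semiring R] : Matrix (Fin n) (Fin n) R :=
  .of fun k j => ((j : ℕ).choose k : R)

theorem trace_pascal : (pascal n R).trace = n := by
  simp [trace, pascal]

theorem vandermonde_mul_pascal (v : Fin n → R) :
    vandermonde v * pascal n R = vandermonde (v + 1) := by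
  ext i j
  calc (vandermonde v * pascal n R) i j
      = ∑ k : Fin n, v i ^ (k : ℕ) * ((j : ℕ).choose k : R) := rfl
    _ = ∑ k ∈ range n, v i ^ k * ((j : ℕ).choose k : R) :=
        Fin.sum_univ_eq_sum_range (fun k => v i ^ k * ((j : ℕ).choose k : R)) n
    _ = ∑ k ∈ range (j + 1), v i ^ k * ((j : ℕ).choose k : R) := by
        refine (sum_subset (range_subset_range.mpr j.2) fun k _ hk => ?_).symm
        rw [Nat.choose_eq_zero_of_lt (by simpa using hk), Nat.cast_zero, mul_zero]
    _ = (v i + 1) ^ (j : ℕ) := by simp [add_pow]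

theorem vandermonde_update (v : Fin n → R) (i : Fin n) (a : R) :
    vandermonde (Function.update v i a) = (vandermonde v).updateRow i (fun j => a ^ (j : ℕ)) := by
  ext k j
  rcases eq_or_ne k i with rfl | hki <;> simp [vandermonde_apply, updateRow_apply, *]

theorem sum_det_vandermonde_update_add_one (v : Fin n → R) :
    ∑ i, (vandermonde (Function.update v i (v i + 1))).det = n * (vandermonde v).det := by
  have hrow (i : Fin n) :
      (fun j : Fin n => (v i + 1) ^ (j : ℕ)) = (vandermonde v * pascal n R) i := by
    rw [vandermonde_mul_pascal]
    rfl
  simp only [vandermonde_update, hrow, sum_det_updateRow_mul, trace_pascal, mul_comm]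

end Pascal

end Matrix

theorem vandermondeProd_eq_det {n : ℕ} (x : Fin n → ℤ) :
    vandermondeProd x = (vandermonde x).det := by
  rw [det_vandermonde, vandermondeProd, prod_filter, Fintype.prod_prod_type]
  refine prod_congr rfl fun a _ => ?_
  rw [← prod_filter]
  congr
  ext
  simp

theorem vandermonde_harmonic_general (n : ℕ) (x : Fin n → ℤ) :
    ∑ i : Fin n, vandermondeProd (fun j => x j + if j = i then 1 else 0)
      = (n : ℤ) * vandermondeProd x := by
  have hshift (i : Fin n) :
      (fun j => x j + if j = i then 1 else 0) = Function.update x i (x i + 1) := by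
    ext j
    rcases eq_or_ne j i with rfl | hji <;> simp [*]
  simp only [hshift, vandermondeProd_eq_det, sum_det_vandermonde_update_add_one]

/-- The Vandermonde determinant is harmonic for the generator of `n` independent one-sided
random walks: `∑_{i=1}^n (Δ_n(x + e_i) - Δ_n(x)) = 0`, i.e.
`∑_{i=1}^n Δ_n(x + e_i) = n · Δ_n(x)`. -/
theorem vandermonde_harmonic (n : ℕ) (hn : 1 ≤ n) (x : Fin n → ℤ) :
    ∑ i : Fin n, vandermondeProd (fun j => x j + if j = i then 1 else 0)
      = (n : ℤ) * vandermondeProd x :=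
  vandermonde_harmonic_general n x
end

section
/- Fix N ≥ 1 and x^N = (x_1 < x_2 < ⋯ < x_N) ∈ ℤ^N. The number of Gelfand–Tsetlin patterns with top row x^N, i.e., the number of sequences (x^1, x^2, …, x^{N−1}) with x^n ∈ W_n and x^n ≺ x^{n+1} for all 1 ≤ n ≤ N−1 (where x^N is the given vector), equals ∏_{1≤i<j≤N} (x_j − x_i)/(j − i) = Δ_N(x^N) / ∏_{n=1}^{N−1} n!. -/
/-- `a` (a vector with `n` entries, one level down) interlaces with `b` (a vector with `n+1`
entries): `b_k < a_k ≤ b_{k+1}` for all `k`. -/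
def Interlace {n : ℕ} (a : Fin n → ℤ) (b : Fin (n + 1) → ℤ) : Prop :=
  ∀ i : Fin n, b i.castSucc < a i ∧ a i ≤ b i.succ

/-- The set of Gelfand–Tsetlin patterns `(x^1, …, x^N)` (levels indexed by `n : Fin N`, level `n`
having `n+1` strictly increasing integer entries, consecutive levels interlacing) whose top
level equals the given vector `x`. -/
def GTwithTop (N : ℕ) (hN : 1 ≤ N) (x : Fin N → ℤ) :
    Set ((n : Fin N) → Fin (n.1 + 1) → ℤ) :=
  {g | (∀ n : Fin N, StrictMono (g n)) ∧
       (∀ (k : ℕ) (h : k + 1 < N), Interlace (g ⟨k, by omega⟩) (g ⟨k + 1, h⟩)) ∧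
       g ⟨N - 1, by omega⟩ = fun i => x (Fin.cast (show N - 1 + 1 = N by omega) i)}

/-!
Deleting the top row of a Gelfand–Tsetlin pattern with top row `x ∈ W_{n+1}` leaves a pattern
whose top row `y` interlaces with `x`, so the number `c(x)` of patterns satisfies
`c(x) = ∑_{y ≺ x} c(y)`, with `c = 1` in length one. Since the superfactorial
`sf n = ∏_{k ≤ n} k!` satisfies `sf n = n! · sf (n-1)`, the claim `c(x) · sf n = Δ(x)` follows
by induction from `n! ∑_{y ≺ x} Δ(y) = Δ(x)`.

For that identity write `Δ(y) = Δ(y - 1) = det [(y_i - 1)^{(k)}]` in the falling-factorial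
basis. The set of `y ≺ x` is the box `∏ (x_i, x_{i+1}]`, so by multilinearity the sum over it
is the determinant of the row sums, and the discrete antiderivative
`(k+1) ∑_{t ∈ (u,v]} (t-1)^{(k)} = v^{(k+1)} - u^{(k+1)}` turns `n!` times it into the
determinant of the successive row differences of `[x_i^{(k)}]`, which is `Δ(x)`.
-/

open Finset Matrix Polynomial

theorem prod_filter_lt_sub_eq_det_vandermonde {R : Type*} [CommRing R] {n : ℕ} (v : Fin n → R) :
    ∏ p ∈ univ.filter (fun p : Fin n × Fin n => p.1 < p.2), (v p.2 - v p.1)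
      = (vandermonde v).det := by
  rw [det_vandermonde, prod_filter, ← univ_product_univ, prod_product]
  refine prod_congr rfl fun i _ => ?_
  rw [← prod_filter]
  exact prod_congr (by ext j; simp) fun _ _ => rfl

theorem vandermondeProd_eq_det_descPochhammer {n : ℕ} (x : Fin n → ℤ) :
    vandermondeProd x = (of fun i k : Fin n => (descPochhammer ℤ k).eval (x i)).det := by
  rw [vandermondeProd, prod_filter_lt_sub_eq_det_vandermonde]
  exact det_eval_matrixOfPolynomials_eq_det_vandermonde x _
    (fun k => descPochhammer_natDegree ℤ k) (fun k => monic_descPochhammer ℤ k)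

theorem vandermondeProd_sub_const {n : ℕ} (x : Fin n → ℤ) (c : ℤ) :
    vandermondeProd (fun i => x i - c) = vandermondeProd x := by
  simp only [vandermondeProd, sub_sub_sub_cancel_right]

theorem descPochhammer_eval_add_one_sub_eval {R : Type*} [CommRing R] (k : ℕ) (t : R) :
    (descPochhammer R (k + 1)).eval (t + 1) - (descPochhammer R (k + 1)).eval t
      = (k + 1) * (descPochhammer R k).eval t := by
  nth_rw 1 [descPochhammer_succ_left]
  rw [descPochhammer_succ_eval]
  simp only [eval_mul, eval_X, eval_comp, eval_sub, eval_one, add_sub_cancel_right]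
  ring

theorem mul_sum_Ioc_descPochhammer_eval (k : ℕ) {u v : ℤ} (huv : u ≤ v) :
    (k + 1) * ∑ t ∈ Ioc u v, (descPochhammer ℤ k).eval (t - 1)
      = (descPochhammer ℤ (k + 1)).eval v - (descPochhammer ℤ (k + 1)).eval u := by
  induction v, huv using Int.leInduction with
  | base => simp
  | succ v huv ih =>
    have hIoc : Ioc u (v + 1) = insert (v + 1) (Ioc u v) := by
      ext; simp only [mem_Ioc, mem_insert]; omega
    rw [hIoc, sum_insert (by simp), mul_add, ih, add_sub_cancel_right,
      ← descPochhammer_eval_add_one_sub_eval]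
    ring

theorem sum_piFinset_det_eq_det_sum_rows {R ι n : Type*} [CommRing R] [Fintype n] [DecidableEq n]
    [DecidableEq ι] (A : n → Finset ι) (f : ι → n → R) :
    ∑ y ∈ Fintype.piFinset A, (of fun i k => f (y i) k).det
      = (of fun i k => ∑ t ∈ A i, f t k).det := by
  simp only [← Finset.sum_apply]
  exact ((detRowAlternating (R := R) (n := n)).toMultilinearMap.map_sum_finset
    (fun _ t => f t) A).symm

theorem det_eq_det_succ_sub_castSucc_of_col_zero {R : Type*} [CommRing R] {n : ℕ}
    (A : Matrix (Fin (n + 1)) (Fin (n + 1)) R) (hA : ∀ i, A i 0 = 1) :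
    A.det = (of fun i k : Fin n => A i.succ k.succ - A i.castSucc k.succ).det := by
  let B : Matrix (Fin (n + 1)) (Fin (n + 1)) R :=
    of (Fin.cases (A 0) fun i => A i.succ - A i.castSucc)
  have hAB : A.det = B.det :=
    det_eq_of_forall_row_eq_smul_add_pred (fun _ => 1) (fun _ => rfl) fun i j => by simp [B]
  rw [hAB, det_succ_column_zero, Fin.sum_univ_succ]
  simp [B, hA, Fin.succAbove_zero]
  rfl

noncomputable def interlacingFinset {n : ℕ} (b : Fin (n + 1) → ℤ) : Finset (Fin n → ℤ) :=
  Fintype.piFinset fun i => Ioc (b i.castSucc) (b i.succ)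

theorem mem_interlacingFinset {n : ℕ} {b : Fin (n + 1) → ℤ} {a : Fin n → ℤ} :
    a ∈ interlacingFinset b ↔ Interlace a b := by
  simp only [interlacingFinset, Fintype.mem_piFinset, mem_Ioc, Interlace]

theorem Interlace.strictMono {n : ℕ} {a : Fin n → ℤ} {b : Fin (n + 1) → ℤ} (h : Interlace a b)
    (hb : StrictMono b) : StrictMono a := fun i j hij =>
  calc a i ≤ b i.succ := (h i).2
    _ ≤ b j.castSucc := hb.monotone (Fin.succ_le_castSucc_iff.mpr hij)
    _ < a j := (h j).1

theorem factorial_mul_sum_vandermondeProd_interlacingFinset {n : ℕ} {b : Fin (n + 1) → ℤ}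
    (hb : Monotone b) :
    (n.factorial : ℤ) * ∑ a ∈ interlacingFinset b, vandermondeProd a = vandermondeProd b := by
  have hfact : (n.factorial : ℤ) = ∏ k : Fin n, ((k : ℤ) + 1) := by
    rw [Fin.prod_univ_eq_prod_range (fun k => (k : ℤ) + 1), ← prod_range_add_one_eq_factorial]
    push_cast; rfl
  calc (n.factorial : ℤ) * ∑ a ∈ interlacingFinset b, vandermondeProd a
      = (∏ k : Fin n, ((k : ℤ) + 1)) * (of fun i k : Fin n =>
          ∑ t ∈ Ioc (b i.castSucc) (b i.succ), (descPochhammer ℤ k).eval (t - 1)).det := by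
        rw [hfact, interlacingFinset, ← sum_piFinset_det_eq_det_sum_rows]
        congr 1
        refine sum_congr rfl fun a _ => ?_
        rw [← vandermondeProd_sub_const a 1, vandermondeProd_eq_det_descPochhammer]
    _ = (of fun i k : Fin n => (descPochhammer ℤ (k + 1)).eval (b i.succ)
          - (descPochhammer ℤ (k + 1)).eval (b i.castSucc)).det := by
        rw [← det_mul_row]
        congr
        ext i k
        exact mul_sum_Ioc_descPochhammer_eval k (hb (Fin.castSucc_le_succ i))
    _ = vandermondeProd b := by
        rw [vandermondeProd_eq_det_descPochhammer,
          det_eq_det_succ_sub_castSucc_of_col_zero _ fun i => by simp]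
        rfl

abbrev GTPattern (N : ℕ) := (n : Fin N) → Fin (n.1 + 1) → ℤ

theorem mem_GTwithTop_iff {M : ℕ} {x : Fin (M + 1) → ℤ} {g : GTPattern (M + 1)} :
    g ∈ GTwithTop (M + 1) (by omega) x ↔ (∀ n, StrictMono (g n)) ∧
      (∀ n : Fin M, Interlace (g n.castSucc) (g n.succ)) ∧ g (Fin.last M) = x := by
  refine and_congr Iff.rfl (and_congr ⟨fun h n => h n (Nat.succ_lt_succ n.2),
    fun h k hk => h ⟨k, by omega⟩⟩ Iff.rfl)

section Recursion

variable {M : ℕ} {x : Fin (M + 2) → ℤ}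

theorem interlace_init_last {G : GTPattern (M + 2)} (hG : G ∈ GTwithTop (M + 2) (by omega) x) :
    Interlace (Fin.init G (Fin.last M)) x := by
  obtain ⟨-, hI, htop⟩ := mem_GTwithTop_iff.mp hG
  exact htop ▸ hI (Fin.last M)

theorem init_mem_GTwithTop {G : GTPattern (M + 2)} (hG : G ∈ GTwithTop (M + 2) (by omega) x) :
    Fin.init G ∈ GTwithTop (M + 1) (by omega) (Fin.init G (Fin.last M)) := by
  obtain ⟨hmono, hI, -⟩ := mem_GTwithTop_iff.mp hG
  exact mem_GTwithTop_iff.mpr ⟨fun n => hmono _, fun n => hI n.castSucc, rfl⟩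

theorem snoc_mem_GTwithTop (hx : StrictMono x) {y : Fin (M + 1) → ℤ} (hy : Interlace y x)
    {g : GTPattern (M + 1)} (hg : g ∈ GTwithTop (M + 1) (by omega) y) :
    (Fin.snoc g x : GTPattern (M + 2)) ∈ GTwithTop (M + 2) (by omega) x := by
  obtain ⟨hmono, hI, htop⟩ := mem_GTwithTop_iff.mp hg
  refine mem_GTwithTop_iff.mpr ⟨fun n => ?_, fun n => ?_, Fin.snoc_last _ _⟩
  · induction n using Fin.lastCases with
    | last => simpa using hx
    | cast n => simpa using hmono n
  · induction n using Fin.lastCases with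
    | last => simpa [htop] using hy
    | cast n =>
      -- `Fin.snoc_castSucc` only sees `n.succ.castSucc`, not the equal `n.castSucc.succ`
      change Interlace ((Fin.snoc g x : GTPattern (M + 2)) n.castSucc.castSucc)
        ((Fin.snoc g x : GTPattern (M + 2)) n.succ.castSucc)
      rw [Fin.snoc_castSucc, Fin.snoc_castSucc]
      exact hI n

noncomputable def GTwithTop.equivSigma (hx : StrictMono x) :
    GTwithTop (M + 2) (by omega) x ≃
      Σ y : interlacingFinset x, GTwithTop (M + 1) (by omega) (y : Fin (M + 1) → ℤ) where
  toFun G := ⟨⟨Fin.init G.1 (Fin.last M), mem_interlacingFinset.mpr (interlace_init_last G.2)⟩,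
    ⟨Fin.init G.1, init_mem_GTwithTop G.2⟩⟩
  invFun p := ⟨Fin.snoc p.2.1 x, snoc_mem_GTwithTop hx (mem_interlacingFinset.mp p.1.2) p.2.2⟩
  left_inv := by
    rintro ⟨G, hG⟩
    refine Subtype.ext ?_
    change (Fin.snoc (Fin.init G) x : GTPattern (M + 2)) = G
    rw [← (mem_GTwithTop_iff.mp hG).2.2, Fin.snoc_init_self]
  right_inv := by
    rintro ⟨⟨y, hy⟩, g, hg⟩
    obtain rfl : g (Fin.last M) = y := (mem_GTwithTop_iff.mp hg).2.2
    exact Sigma.subtype_ext (Subtype.ext (by simp)) (by simp)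

end Recursion

theorem card_GTwithTop_one (x : Fin 1 → ℤ) : Nat.card (GTwithTop 1 le_rfl x) = 1 := by
  rw [Nat.card_eq_one_iff_exists]
  refine ⟨⟨Fin.snoc (fun i => i.elim0) x, mem_GTwithTop_iff.mpr
    ⟨fun n => ?_, fun n => n.elim0, Fin.snoc_last _ _⟩⟩, fun g => ?_⟩
  · obtain rfl := Fin.fin_one_eq_zero n
    exact Subsingleton.strictMono (α := Fin 1) _
  ext n : 2
  obtain rfl : n = Fin.last 0 := Subsingleton.elim _ _
  exact (mem_GTwithTop_iff.mp g.2).2.2.trans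
    (Fin.snoc_last (α := fun n : Fin 1 => Fin (n.1 + 1) → ℤ) x fun i => i.elim0).symm

theorem finite_GTwithTop (M : ℕ) {x : Fin (M + 1) → ℤ} (hx : StrictMono x) :
    (GTwithTop (M + 1) (by omega) x).Finite := by
  induction M with
  | zero => exact Nat.finite_of_card_ne_zero (by rw [card_GTwithTop_one]; exact one_ne_zero)
  | succ M ih =>
    have : ∀ y : interlacingFinset x,
        Finite (GTwithTop (M + 1) (by omega) (y : Fin (M + 1) → ℤ)) :=
      fun y => ih ((mem_interlacingFinset.mp y.2).strictMono hx)
    exact Finite.of_equiv _ (GTwithTop.equivSigma hx).symm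

theorem card_GTwithTop_succ {M : ℕ} {x : Fin (M + 2) → ℤ} (hx : StrictMono x) :
    Nat.card (GTwithTop (M + 2) (by omega) x)
      = ∑ y ∈ interlacingFinset x, Nat.card (GTwithTop (M + 1) (by omega) y) := by
  have : ∀ y : interlacingFinset x,
      Finite (GTwithTop (M + 1) (by omega) (y : Fin (M + 1) → ℤ)) :=
    fun y => finite_GTwithTop M ((mem_interlacingFinset.mp y.2).strictMono hx)
  rw [Nat.card_congr (GTwithTop.equivSigma hx), Nat.card_sigma, sum_coe_sort _ (fun y =>
    Nat.card (GTwithTop (M + 1) (by omega) y))]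

theorem Nat.superFactorial_ne_zero (n : ℕ) : n.superFactorial ≠ 0 := by
  rw [← Nat.prod_range_succ_factorial]
  exact prod_ne_zero_iff.mpr fun k _ => k.factorial_ne_zero

theorem card_GTwithTop_mul_superFactorial (M : ℕ) {x : Fin (M + 1) → ℤ} (hx : StrictMono x) :
    (Nat.card (GTwithTop (M + 1) (by omega) x) : ℤ) * M.superFactorial = vandermondeProd x := by
  induction M with
  | zero =>
    rw [card_GTwithTop_one, vandermondeProd, prod_eq_one fun p hp => absurd (mem_filter.mp hp).2
      (Fin.ext (by omega) : p.1 = p.2).not_lt]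
    simp
  | succ M ih =>
    rw [card_GTwithTop_succ hx, Nat.superFactorial_succ,
      ← factorial_mul_sum_vandermondeProd_interlacingFinset hx.monotone]
    push_cast
    rw [sum_mul, mul_sum]
    refine sum_congr rfl fun y hy => ?_
    rw [← ih ((mem_interlacingFinset.mp hy).strictMono hx)]
    ring

/-- The number of Gelfand–Tsetlin patterns with fixed top row `x^N = (x_1 < … < x_N)` equals
`∏_{1≤i<j≤N} (x_j - x_i)/(j - i) = Δ_N(x^N)/∏_{n=1}^{N-1} n!`. -/
theorem gt_pattern_count (N : ℕ) (hN : 1 ≤ N) (x : Fin N → ℤ) (hx : StrictMono x) :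
    ((Nat.card (GTwithTop N hN x) : ℚ) =
      ∏ p ∈ Finset.univ.filter (fun p : Fin N × Fin N => p.1 < p.2),
        ((x p.2 - x p.1 : ℤ) : ℚ) / (((p.2 : ℕ) - (p.1 : ℕ) : ℕ) : ℚ))
    ∧ (Nat.card (GTwithTop N hN x) : ℤ) * ∏ n ∈ Finset.range N, (n.factorial : ℤ)
        = vandermondeProd x := by
  obtain ⟨M, rfl⟩ : ∃ M, N = M + 1 := ⟨N - 1, by omega⟩
  have hcard := card_GTwithTop_mul_superFactorial M hx
  have hsf : ∏ n ∈ range (M + 1), (n.factorial : ℤ) = M.superFactorial := by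
    exact_mod_cast Nat.prod_range_succ_factorial M
  refine ⟨?_, hsf ▸ hcard⟩
  have hden : ∏ p ∈ univ.filter (fun p : Fin (M + 1) × Fin (M + 1) => p.1 < p.2),
      (((p.2 : ℕ) - (p.1 : ℕ) : ℕ) : ℚ) = M.superFactorial := by
    rw [← det_vandermonde_id_eq_superFactorial, ← prod_filter_lt_sub_eq_det_vandermonde]
    exact prod_congr rfl fun p hp => Nat.cast_sub (mem_filter.mp hp).2.le
  rw [prod_div_distrib, hden, eq_div_iff (mod_cast M.superFactorial_ne_zero), ← Int.cast_prod,
    ← vandermondeProd, ← hcard]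
  push_cast
  ring
end

section
/- Let N ≥ 1, x^N ∈ W_N and x^{N−1} ∈ W_{N−1}. Define the N×N matrix M by M_{i,j} = 1_{[x_j^N ≥ x_i^{N−1}]} for 1 ≤ i ≤ N−1 and 1 ≤ j ≤ N, and M_{N,j} = 1 for all j (the row of the 'virtual' variable). Then det M = (−1)^{N−1} if x^{N−1} ≺ x^N, and det M = 0 otherwise. In particular the interlacing indicator 1_{[x^{N−1} ≺ x^N]} equals ± det(φ(x_i^{N−1}, x_j^N))_{i,j=1}^N with φ(x,y) = 1_{[y ≥ x]} and φ(virt, y) = 1. -/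
/-!
Because `x` is strictly increasing, row `i < N - 1` of the matrix is the indicator of the columns
`j ≥ c i`, where `c i = #{l | x l < y i}`, and the virtual row is the same with threshold `0`.
A matrix of such threshold rows is a row permutation `σ` of the upper unitriangular all-ones
matrix when `c` is a permutation `σ`, so its determinant is `sign σ`; otherwise it has a repeated
row or a zero row. Interlacing says exactly that `c` is the rotation `i ↦ i + 1`, `N - 1 ↦ 0`,
of sign `(-1)^(N-1)`. Conversely, `c` is monotone on the real rows and vanishes on the virtual
one, so the rotation is the only permutation it can be.
-/

open Finset Equiv

def thresholdMatrix (R : Type*) [Zero R] [One R] {m : ℕ} (c : Fin m → ℕ) :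
    Matrix (Fin m) (Fin m) R :=
  Matrix.of fun i j => if c i ≤ j then 1 else 0

section ThresholdMatrix

variable {R : Type*} [CommRing R] {m : ℕ}

theorem det_thresholdMatrix_perm (σ : Perm (Fin m)) :
    (thresholdMatrix R fun i => (σ i : ℕ)).det = Perm.sign σ := by
  let U : Matrix (Fin m) (Fin m) R := Matrix.of fun i j => if i ≤ j then 1 else 0
  have hU : U.det = 1 := by
    rw [Matrix.det_of_isUpperTriangular (M := U) fun i j hji => if_neg (not_le.mpr hji)]
    simp [U]
  have hperm : thresholdMatrix R (fun i => (σ i : ℕ)) = U.submatrix σ id := by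
    ext i j
    simp only [thresholdMatrix, U, Matrix.submatrix_apply, Matrix.of_apply, id, Fin.le_def]
  rw [hperm, Matrix.det_permute, hU, mul_one]

theorem det_thresholdMatrix_eq_zero (c : Fin m → ℕ)
    (hc : ∀ σ : Perm (Fin m), (fun i => (σ i : ℕ)) ≠ c) : (thresholdMatrix R c).det = 0 := by
  by_cases hlt : ∀ i, c i < m
  · obtain ⟨i, j, hij, hcij⟩ : ∃ i j, i ≠ j ∧ c i = c j := by
      by_contra! hinj
      have hf : Function.Injective fun i => (⟨c i, hlt i⟩ : Fin m) := fun i j h =>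
        by_contra fun hne => hinj i j hne (congrArg Fin.val h)
      exact hc (Equiv.ofBijective _ hf.bijective_of_finite) rfl
    exact Matrix.det_zero_of_row_eq hij (by ext; simp [thresholdMatrix, hcij])
  · push Not at hlt
    obtain ⟨i, hi⟩ := hlt
    exact Matrix.det_eq_zero_of_row_eq_zero i fun j => if_neg (by omega)

end ThresholdMatrix

theorem Equiv.Perm.eq_finRotate_of_monotone_castSucc {n : ℕ} (σ : Perm (Fin (n + 1)))
    (hmono : Monotone (σ ∘ Fin.castSucc)) (hlast : σ (Fin.last n) = 0) :
    σ = finRotate (n + 1) := by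
  have hsucc : σ ∘ Fin.castSucc = Fin.succ := by
    refine ((hmono.strictMono_of_injective (σ.injective.comp (Fin.castSucc_injective n))).range_inj
      (Fin.strictMono_succ)).mp ?_
    rw [← Fin.succAbove_last, ← Fin.succAbove_zero, Set.range_comp, Fin.range_succAbove,
      Fin.range_succAbove, Set.image_compl_eq σ.bijective, Set.image_singleton, hlast]
  ext i
  induction i using Fin.lastCases with
  | last => simp [hlast]
  | cast i => simp [← congrFun hsucc i]

section Interlacing

variable {α : Type*} [LinearOrder α]

theorem StrictMono.le_apply_iff_card_filter_lt_le {m : ℕ} {x : Fin m → α} (hx : StrictMono x)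
    (a : α) (j : Fin m) : a ≤ x j ↔ #{l | x l < a} ≤ j := by
  constructor
  · intro h
    calc #{l | x l < a} ≤ #(Iio j) := card_le_card fun l hl => by
          simp only [mem_filter, mem_univ, true_and, mem_Iio] at hl ⊢
          exact hx.lt_iff_lt.mp (hl.trans_le h)
      _ = j := Fin.card_Iio j
  · intro h
    by_contra! hlt
    have : #(Iic j) ≤ #{l | x l < a} := card_le_card fun l hl => by
      simp only [mem_filter, mem_univ, true_and, mem_Iic] at hl ⊢
      exact (hx.monotone hl).trans_lt hlt
    rw [Fin.card_Iic] at this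
    omega

theorem StrictMono.card_filter_lt_eq_succ_iff {m : ℕ} {x : Fin m → α} (hx : StrictMono x)
    (a : α) {i : ℕ} (hi : i + 1 < m) :
    #{l | x l < a} = i + 1 ↔ x ⟨i, by omega⟩ < a ∧ a ≤ x ⟨i + 1, hi⟩ := by
  rw [← not_le, hx.le_apply_iff_card_filter_lt_le, hx.le_apply_iff_card_filter_lt_le]
  simp only [not_le]
  omega

def Interlaces {N : ℕ} (y : Fin (N - 1) → α) (x : Fin N → α) : Prop :=
  ∀ k : Fin (N - 1),
    x ⟨k, k.2.trans_le (N.sub_le 1)⟩ < y k ∧ y k ≤ x ⟨k + 1, Nat.add_lt_of_lt_sub k.2⟩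

def rowThreshold {N : ℕ} (y : Fin (N - 1) → α) (x : Fin N → α) (i : Fin N) : ℕ :=
  if h : (i : ℕ) < N - 1 then #{l | x l < y ⟨i, h⟩} else 0

variable {N : ℕ} {y : Fin (N - 1) → α} {x : Fin N → α}

theorem interlacingMatrix_eq_thresholdMatrix (R : Type*) [Zero R] [One R] (hx : StrictMono x) :
    (Matrix.of fun i j : Fin N =>
        if h : (i : ℕ) < N - 1 then (if y ⟨i, h⟩ ≤ x j then (1 : R) else 0) else 1) =
      thresholdMatrix R (rowThreshold y x) := by
  ext i j
  by_cases hi : (i : ℕ) < N - 1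
  · simp only [thresholdMatrix, rowThreshold, Matrix.of_apply, dif_pos hi,
      hx.le_apply_iff_card_filter_lt_le]
  · simp [thresholdMatrix, rowThreshold, hi]

theorem coe_finRotate_eq_ite (i : Fin N) :
    (finRotate N i : ℕ) = if (i : ℕ) < N - 1 then (i : ℕ) + 1 else 0 := by
  cases N with
  | zero => exact i.elim0
  | succ n =>
    rw [coe_finRotate]
    simp only [Fin.ext_iff, Fin.val_last, Nat.add_sub_cancel]
    split_ifs <;> omega

theorem interlaces_iff_rowThreshold_eq_finRotate (hx : StrictMono x) :
    Interlaces y x ↔ rowThreshold y x = fun i => (finRotate N i : ℕ) := by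
  simp only [Interlaces, funext_iff, coe_finRotate_eq_ite, rowThreshold]
  constructor
  · intro hint i
    split_ifs with hi
    · exact (hx.card_filter_lt_eq_succ_iff _ (by omega)).mpr (hint ⟨i, hi⟩)
    · rfl
  · intro h k
    have hk := h ⟨k, by omega⟩
    simp only [k.2, dif_pos] at hk
    exact (hx.card_filter_lt_eq_succ_iff _ (by omega)).mp hk

theorem eq_finRotate_of_coe_eq_rowThreshold (hy : Monotone y) (σ : Perm (Fin N))
    (hσ : (fun i => (σ i : ℕ)) = rowThreshold y x) : σ = finRotate N := by
  cases N with
  | zero => exact Subsingleton.elim _ _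
  | succ n =>
    refine σ.eq_finRotate_of_monotone_castSucc (fun i j hij => ?_) (Fin.ext ?_)
    · simp only [Function.comp, Fin.le_def, congrFun hσ, rowThreshold, Fin.val_castSucc]
      rw [dif_pos (by omega), dif_pos (by omega)]
      exact card_le_card fun l hl => by
        simp only [mem_filter, mem_univ, true_and] at hl ⊢
        exact hl.trans_le (hy hij)
    · simpa [rowThreshold] using congrFun hσ (Fin.last n)

end Interlacing

/-- The interlacing indicator as a determinant: for `y ∈ W_{N-1}` and `x ∈ W_N`, the `N × N`
matrix with entries `1_{[x_j ≥ y_i]}` for the first `N-1` rows and `1` in the last ("virtual")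
row has determinant `(-1)^{N-1}` if `y ≺ x` (i.e. `x_k < y_k ≤ x_{k+1}` for all `k`), and
determinant `0` otherwise. -/
theorem interlacing_indicator_det (N : ℕ)
    (y : Fin (N - 1) → ℤ) (x : Fin N → ℤ) (hy : StrictMono y) (hx : StrictMono x) :
    (Matrix.of fun i j : Fin N =>
        if h : (i : ℕ) < N - 1 then (if y ⟨i, h⟩ ≤ x j then (1 : ℤ) else 0) else 1).det
      = if ∀ k : Fin (N - 1),
            x ⟨k, by have := k.2; omega⟩ < y k ∧ y k ≤ x ⟨(k : ℕ) + 1, by have := k.2; omega⟩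
        then (-1 : ℤ) ^ (N - 1) else 0 := by
  rw [interlacingMatrix_eq_thresholdMatrix ℤ hx]
  split_ifs with hint
  · rw [(interlaces_iff_rowThreshold_eq_finRotate hx).mp hint, det_thresholdMatrix_perm,
      sign_finRotate]
    simp
  · refine det_thresholdMatrix_eq_zero _ fun σ hσ =>
      hint ((interlaces_iff_rowThreshold_eq_finRotate hx).mpr ?_)
    rw [← hσ, eq_finRotate_of_coe_eq_rowThreshold hy.monotone σ hσ]
end

section
/- Let n ≥ 1, p ∈ ℝ, and define f : ℤ → ℝ by f(−1) = p, f(0) = 1 − p, and f(m) = 0 for m ∉ {−1, 0}. Then for every x ∈ W_n, ∑_{y ∈ W_n} Δ_n(y) · det(f(x_i − y_j))_{i,j=1}^n = Δ_n(x). (The sum is finite, since det(f(x_i − y_j)) ≠ 0 forces each y_j ∈ {x_j, x_j + 1}.) Consequently, for 0 < p < 1, the kernel P_n(x,y) = (Δ_n(y)/Δ_n(x)) det(f(x_i − y_j))_{i,j=1}^n on W_n has row sums equal to 1. -/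
/-- One-step transition weight of a single Bernoulli(p) walker: `f(-1) = p`, `f(0) = 1 - p`,
and `f(m) = 0` otherwise. -/
def bern (p : ℝ) : ℤ → ℝ := fun m => if m = -1 then p else if m = 0 then 1 - p else 0

/-!
Expanding `det (∑_t φ_a(t) ψ_b(t))` multilinearly in its columns and grouping the tuples
`(t_1, …, t_n)` by their increasing rearrangement gives the discrete Andréief (Cauchy–Binet)
identity `∑_{y increasing} det(φ_i(y_j)) det(ψ_i(y_j)) = det(∑_t φ_a(t) ψ_b(t))`, the sum running
over a finite set `T` of values. Take `φ_a(t) = t^a`, so that the first determinant is `Δ_n(y)`,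
`ψ_b(t) = f(x_b - t)`, and for `T` the points `x_j, x_j + 1` outside which every determinant
`det(f(x_i - y_j))` vanishes. Then `∑_t t^a f(x_b - t) = (1 - p) x_b^a + p (x_b + 1)^a` is a monic
polynomial of degree `a` evaluated at `x_b`, so the right-hand side is the Vandermonde
determinant `Δ_n(x)`.
-/

open Finset Matrix Polynomial Function

namespace Finset

theorem sum_piFinset_eq_sum_strictMono_sum_perm {α M : Type*} [LinearOrder α] [AddCommMonoid M]
    {n : ℕ} (T : Finset α) (F : (Fin n → α) → M) (hF : ∀ y, F y ≠ 0 → Injective y) :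
    ∑ y ∈ Fintype.piFinset fun _ => T, F y =
      ∑ z ∈ (Fintype.piFinset fun _ => T).filter StrictMono,
        ∑ σ : Equiv.Perm (Fin n), F (z ∘ σ) := by
  rw [← sum_product']
  symm
  refine sum_bij_ne_zero (fun q _ _ => q.1 ∘ q.2) ?_ ?_ ?_ (fun _ _ _ => rfl)
  · rintro ⟨z, σ⟩ hq -
    simp only [mem_product, mem_filter, Fintype.mem_piFinset] at hq
    exact Fintype.mem_piFinset.2 fun j => hq.1.1 (σ j)
  · rintro ⟨z₁, σ₁⟩ h₁ - ⟨z₂, σ₂⟩ h₂ - (h : z₁ ∘ σ₁ = z₂ ∘ σ₂)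
    simp only [mem_product, mem_filter] at h₁ h₂
    have hz : z₁ = z₂ := by
      have := Tuple.unique_monotone (f := z₁ ∘ σ₁) (σ := σ₁⁻¹) (τ := σ₂⁻¹)
        (by simpa [comp_assoc] using h₁.1.2.monotone)
        (by rw [h]; simpa [comp_assoc] using h₂.1.2.monotone)
      calc z₁ = (z₁ ∘ σ₁) ∘ ⇑σ₁⁻¹ := by ext; simp
        _ = (z₁ ∘ σ₁) ∘ ⇑σ₂⁻¹ := this
        _ = z₂ := by rw [h]; ext; simp
    subst hz
    have hσ : σ₁ = σ₂ := Equiv.ext fun j => h₁.1.2.injective (congrFun h j)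
    rw [hσ]
  · intro y hy hFy
    have hinj := hF y hFy
    refine ⟨(y ∘ Tuple.sort y, (Tuple.sort y)⁻¹), ?_, ?_, ?_⟩
    · simp only [mem_product, mem_filter, mem_univ, and_true, Fintype.mem_piFinset]
      exact ⟨fun j => Fintype.mem_piFinset.1 hy _,
        (Tuple.monotone_sort y).strictMono_of_injective (hinj.comp (Tuple.sort y).injective)⟩
    · simpa [comp_assoc] using hFy
    · simp [comp_assoc]

end Finset

namespace Matrix

variable {α R : Type*} [CommRing R] {n : ℕ}

theorem det_sum_mul_eq_sum_piFinset (T : Finset α) (φ ψ : Fin n → α → R) :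
    (of fun a b => ∑ t ∈ T, φ a t * ψ b t).det =
      ∑ y ∈ Fintype.piFinset fun _ => T, (of fun i j => φ i (y j)).det * ∏ j, ψ j (y j) := by
  simp only [det_apply', of_apply, prod_univ_sum, mul_sum, sum_mul]
  rw [sum_comm]
  refine sum_congr rfl fun y _ => sum_congr rfl fun σ _ => ?_
  rw [prod_mul_distrib, mul_assoc]

theorem det_of_comp_perm (φ : Fin n → α → R) (z : Fin n → α) (σ : Equiv.Perm (Fin n)) :
    (of fun i j => φ i (z (σ j))).det = Equiv.Perm.sign σ * (of fun i j => φ i (z j)).det :=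
  det_permute' σ (of fun i j => φ i (z j))

theorem det_of_eq_sum_perm (ψ : Fin n → α → R) (z : Fin n → α) :
    (of fun i j => ψ i (z j)).det =
      ∑ σ : Equiv.Perm (Fin n), Equiv.Perm.sign σ * ∏ j, ψ j (z (σ j)) := by
  rw [← det_transpose, det_apply']
  rfl

theorem sum_strictMono_det_mul_det [LinearOrder α] (T : Finset α) (φ ψ : Fin n → α → R) :
    ∑ z ∈ (Fintype.piFinset fun _ => T).filter StrictMono,
        (of fun i j => φ i (z j)).det * (of fun i j => ψ i (z j)).det =
      (of fun a b => ∑ t ∈ T, φ a t * ψ b t).det := by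
  rw [det_sum_mul_eq_sum_piFinset, sum_piFinset_eq_sum_strictMono_sum_perm]
  · refine sum_congr rfl fun z _ => ?_
    simp only [Function.comp_apply, det_of_comp_perm, det_of_eq_sum_perm ψ z, mul_sum]
    exact sum_congr rfl fun σ _ => by ring
  · intro y hy
    by_contra hinj
    obtain ⟨i, j, hij, hne⟩ := not_injective_iff.1 hinj
    exact hy (by rw [det_zero_of_column_eq hne fun k => by rw [of_apply, of_apply, hij], zero_mul])

end Matrix

theorem cast_vandermondeProd {R : Type*} [CommRing R] {n : ℕ} (y : Fin n → ℤ) :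
    (vandermondeProd y : R) = (vandermonde fun i => (y i : R)).det := by
  rw [vandermondeProd, det_vandermonde, prod_filter, Fintype.prod_prod_type]
  push_cast
  refine prod_congr rfl fun i _ => ?_
  rw [← prod_filter, filter_lt_eq_Ioi]

theorem vandermondeProd_pos {n : ℕ} {x : Fin n → ℤ} (hx : StrictMono x) : 0 < vandermondeProd x :=
  prod_pos fun _ hq => sub_pos.2 (hx (mem_filter.1 hq).2)

theorem bern_sub_eq_zero {p : ℝ} {m t : ℤ} (h₀ : t ≠ m) (h₁ : t ≠ m + 1) : bern p (m - t) = 0 := by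
  rw [bern, if_neg (by omega), if_neg (by omega)]

theorem sum_mul_bern_sub (p : ℝ) (g : ℤ → ℝ) {T : Finset ℤ} {m : ℤ} (hm : m ∈ T)
    (hm' : m + 1 ∈ T) :
    ∑ t ∈ T, g t * bern p (m - t) = (1 - p) * g m + p * g (m + 1) := by
  rw [← sum_subset (insert_subset hm (singleton_subset_iff.2 hm')), sum_pair (by omega)]
  · norm_num [bern]
    ring
  · intro t _ ht
    simp only [mem_insert, mem_singleton, not_or] at ht
    rw [bern_sub_eq_zero ht.1 ht.2, mul_zero]

def stepTargets {n : ℕ} (x : Fin n → ℤ) : Finset ℤ :=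
  univ.image x ∪ univ.image (x · + 1)

theorem mem_piFinset_stepTargets_of_det_ne_zero {n : ℕ} {p : ℝ} {x y : Fin n → ℤ}
    (h : (of fun i j => bern p (x i - y j)).det ≠ 0) :
    y ∈ Fintype.piFinset fun _ => stepTargets x := by
  refine Fintype.mem_piFinset.2 fun j => ?_
  by_contra hj
  refine h (det_eq_zero_of_column_eq_zero j fun i => bern_sub_eq_zero ?_ ?_) <;> intro hi <;>
    simp [stepTargets, hi] at hj

section StepPoly

variable {R : Type*} [CommRing R]

noncomputable def stepPoly (p : R) (k : ℕ) : R[X] := X ^ k + C p * ((X + C 1) ^ k - X ^ k)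

theorem eval_stepPoly (p t : R) (k : ℕ) :
    (stepPoly p k).eval t = (1 - p) * t ^ k + p * (t + 1) ^ k := by
  simp only [stepPoly, eval_add, eval_mul, eval_sub, eval_pow, eval_C, eval_X]
  ring

theorem isMonicOfDegree_stepPoly [Nontrivial R] (p : R) (k : ℕ) :
    IsMonicOfDegree (stepPoly p k) k := by
  rcases Nat.eq_zero_or_pos k with rfl | hk
  · simp [stepPoly, isMonicOfDegree_zero_iff]
  · have hpow : IsMonicOfDegree ((X + C 1 : R[X]) ^ k) k := by
      simpa using (isMonicOfDegree_X_add_one (1 : R)).pow k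
    exact (isMonicOfDegree_X_pow R k).add_right ((natDegree_C_mul_le _ _).trans_lt
      (hpow.natDegree_sub_lt hk.ne' (isMonicOfDegree_X_pow R k)))

end StepPoly

theorem det_sum_pow_mul_bern {n : ℕ} (p : ℝ) (x : Fin n → ℤ) :
    (of fun a b : Fin n => ∑ t ∈ stepTargets x, (t : ℝ) ^ (a : ℕ) * bern p (x b - t)).det =
      vandermondeProd x := by
  have hentries :
      (of fun a b : Fin n => ∑ t ∈ stepTargets x, (t : ℝ) ^ (a : ℕ) * bern p (x b - t)) =
      (of fun i j : Fin n => (stepPoly p (j : ℕ)).eval (x i : ℝ))ᵀ := by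
    ext a b
    rw [transpose_apply, of_apply, of_apply, eval_stepPoly,
      sum_mul_bern_sub p (fun t : ℤ => (t : ℝ) ^ (a : ℕ)) (by simp [stepTargets])
        (by simp [stepTargets])]
    push_cast
    rfl
  rw [hentries, det_transpose, ← det_eval_matrixOfPolynomials_eq_det_vandermonde _ _
    (fun j => (isMonicOfDegree_stepPoly p j).natDegree_eq)
    (fun j => (isMonicOfDegree_stepPoly p j).monic), cast_vandermondeProd]

theorem sum_strictMono_vandermondeProd_mul_det_bern {n : ℕ} (p : ℝ) (x : Fin n → ℤ) :
    ∑ y ∈ (Fintype.piFinset fun _ => stepTargets x).filter StrictMono,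
        (vandermondeProd y : ℝ) * (of fun i j : Fin n => bern p (x i - y j)).det =
      vandermondeProd x := by
  calc _ = ∑ y ∈ (Fintype.piFinset fun _ => stepTargets x).filter StrictMono,
        (of fun i j : Fin n => (y j : ℝ) ^ (i : ℕ)).det *
          (of fun i j : Fin n => bern p (x i - y j)).det :=
        sum_congr rfl fun y _ => by rw [cast_vandermondeProd, ← det_transpose]; rfl
    _ = vandermondeProd x := (sum_strictMono_det_mul_det _ (fun a (t : ℤ) => (t : ℝ) ^ (a : ℕ))
        fun b t => bern p (x b - t)).trans (det_sum_pow_mul_bern p x)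

theorem charlier_row_sum_general (n : ℕ) (p : ℝ) (x : Fin n → ℤ) (hx : StrictMono x) :
    ((∑ᶠ y ∈ {y : Fin n → ℤ | StrictMono y},
        (vandermondeProd y : ℝ) * (Matrix.of fun i j : Fin n => bern p (x i - y j)).det)
      = (vandermondeProd x : ℝ))
    ∧ (0 < p → p < 1 →
        (∑ᶠ y ∈ {y : Fin n → ℤ | StrictMono y},
            ((vandermondeProd y : ℝ) / (vandermondeProd x : ℝ)) *
              (Matrix.of fun i j : Fin n => bern p (x i - y j)).det)
          = 1) := by
  have hsum : ∑ᶠ y ∈ {y : Fin n → ℤ | StrictMono y},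
      (vandermondeProd y : ℝ) * (of fun i j : Fin n => bern p (x i - y j)).det =
        vandermondeProd x := by
    rw [finsum_mem_eq_sum_of_subset (s := {y | StrictMono y})
      (t := (Fintype.piFinset fun _ => stepTargets x).filter StrictMono) _
      (fun y ⟨hy, hne⟩ => mem_filter.2
        ⟨mem_piFinset_stepTargets_of_det_ne_zero (right_ne_zero_of_mul hne), hy⟩)
      (fun y hy => (mem_filter.1 hy).2)]
    exact sum_strictMono_vandermondeProd_mul_det_bern p x
  refine ⟨hsum, fun _ _ => ?_⟩
  have hΔ : (vandermondeProd x : ℝ) ≠ 0 := by exact_mod_cast (vandermondeProd_pos hx).ne'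
  calc _ = ∑ᶠ y ∈ {y : Fin n → ℤ | StrictMono y}, (vandermondeProd x : ℝ)⁻¹ *
        ((vandermondeProd y : ℝ) * (of fun i j : Fin n => bern p (x i - y j)).det) :=
        finsum_mem_congr rfl fun y _ => by rw [div_eq_inv_mul, mul_assoc]
    _ = 1 := by rw [← mul_finsum_mem, hsum, inv_mul_cancel₀ hΔ]

/-- For every `x ∈ W_n`, `∑_{y ∈ W_n} Δ_n(y) det(f(x_i - y_j)) = Δ_n(x)`; consequently, for
`0 < p < 1`, the discrete-time Charlier transition kernel
`P_n(x,y) = (Δ_n(y)/Δ_n(x)) det(f(x_i - y_j))` has row sums equal to `1`. -/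
theorem charlier_row_sum (n : ℕ) (hn : 1 ≤ n) (p : ℝ) (x : Fin n → ℤ) (hx : StrictMono x) :
    ((∑ᶠ y ∈ {y : Fin n → ℤ | StrictMono y},
        (vandermondeProd y : ℝ) * (Matrix.of fun i j : Fin n => bern p (x i - y j)).det)
      = (vandermondeProd x : ℝ))
    ∧ (0 < p → p < 1 →
        (∑ᶠ y ∈ {y : Fin n → ℤ | StrictMono y},
            ((vandermondeProd y : ℝ) / (vandermondeProd x : ℝ)) *
              (Matrix.of fun i j : Fin n => bern p (x i - y j)).det)
          = 1) :=
  charlier_row_sum_general n p x hx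
end

section
/- Let S_1, …, S_n be finite nonempty sets, let P_k : S_k × S_k → ℝ_{≥0} be stochastic matrices (∑_y P_k(x,y) = 1), and let Λᵏ_{k−1} : S_k × S_{k−1} → ℝ_{≥0} be stochastic links (∑_y Λᵏ_{k−1}(x,y) = 1) satisfying the intertwining relation P_k Λᵏ_{k−1} = Λᵏ_{k−1} P_{k−1} =: Δᵏ_{k−1} for 2 ≤ k ≤ n. Define the sequential-update kernel on S_1 × ⋯ × S_n by P^n_Λ(X, Y) = P_1(x^1, y^1) ∏_{k=2}^n P_k(x^k, y^k) Λᵏ_{k−1}(y^k, y^{k−1}) / Δᵏ_{k−1}(x^k, y^{k−1}) when all Δᵏ_{k−1}(x^k, y^{k−1}) > 0, and P^n_Λ(X,Y) = 0 otherwise. Let μ_n be a probability measure on S_n and define M_n(X) = μ_n(x^n) ∏_{k=2}^n Λᵏ_{k−1}(x^k, x^{k−1}). Then for every Y = (y^1,…,y^n), ∑_X M_n(X) P^n_Λ(X, Y) = (μ_n P_n)(y^n) · ∏_{k=2}^n Λᵏ_{k−1}(y^k, y^{k−1}). In particular measures of the product form M_n are preserved by the dynamics P^n_Λ, with the top marginal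 evolving by P_n. -/
/-!
Induct on `n` by splitting off the top coordinate `x = x^{n+1}`. Given `x`, the measure `M_{n+1}`
restricted to the lower levels is `M_n` with top measure `Λ(x, ·)`, and the lower levels of
`P^{n+1}_Λ` form `P^n_Λ`, times a top factor `P(x, y^{n+1}) Λ(y^{n+1}, y^n) / Δ(x, y^n)`.
The induction hypothesis sums the lower levels to `(Λ(x, ·) P_n)(y^n)`, which by the
intertwining relation is `Δ(x, y^n)` and cancels the denominator of the top factor.
-/

open Classical

/-- `Δᵏ⁺¹_k = P_{k+1} Λᵏ⁺¹_k`, the intertwined kernel from level `k+1` to level `k`. -/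
noncomputable def DDk (S : ℕ → Type) [∀ k, Fintype (S k)]
    (P : ∀ k, S k → S k → ℝ) (Λ : ∀ k, S (k + 1) → S k → ℝ)
    (k : ℕ) (x : S (k + 1)) (y : S k) : ℝ :=
  ∑ z : S (k + 1), P (k + 1) x z * Λ k z y

/-- Configurations on levels `0, 1, …, n`. -/
abbrev Cfg (S : ℕ → Type) (n : ℕ) := ∀ k : Fin (n + 1), S k

/-- The sequential-update transition kernel `P^n_Λ` on configurations:
`P^n_Λ(X,Y) = P_0(x⁰,y⁰) ∏_k P_{k+1}(x^{k+1},y^{k+1}) Λ(y^{k+1},y^k) / Δ(x^{k+1},y^k)`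
when all `Δ(x^{k+1},y^k) > 0`, and `0` otherwise. -/
noncomputable def seqPL (S : ℕ → Type) [∀ k, Fintype (S k)]
    (P : ∀ k, S k → S k → ℝ) (Λ : ∀ k, S (k + 1) → S k → ℝ)
    (n : ℕ) (X Y : Cfg S n) : ℝ :=
  if ∀ k : Fin n, 0 < DDk S P Λ k (X k.succ) (Y k.castSucc) then
    P 0 (X 0) (Y 0) *
      ∏ k : Fin n,
        (P ((k : ℕ) + 1) (X k.succ) (Y k.succ) * Λ k (Y k.succ) (Y k.castSucc)
          / DDk S P Λ k (X k.succ) (Y k.castSucc))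
  else 0

open Finset

variable {S : ℕ → Type} {P : ∀ k, S k → S k → ℝ} {Λ : ∀ k, S (k + 1) → S k → ℝ}

def linkedMeasure (Λ : ∀ k, S (k + 1) → S k → ℝ) (n : ℕ) (μ : S n → ℝ) (X : Cfg S n) : ℝ :=
  μ (X (Fin.last n)) * ∏ k : Fin n, Λ k (X k.succ) (X k.castSucc)

lemma linkedMeasure_snoc (n : ℕ) (μ : S (n + 1) → ℝ) (X : Cfg S n) (x : S (n + 1)) :
    linkedMeasure Λ (n + 1) μ (Fin.snoc X x) = μ x * linkedMeasure Λ n (Λ n x) X := by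
  simp only [linkedMeasure, Fin.prod_univ_castSucc, Fin.succ_castSucc, Fin.succ_last,
    Fin.snoc_last, Fin.snoc_castSucc, Fin.val_castSucc, Fin.val_last]
  ring

variable [∀ k, Fintype (S k)]

lemma DDk_nonneg {k : ℕ} {x : S (k + 1)} {y : S k}
    (hP : ∀ z, 0 ≤ P (k + 1) x z) (hΛ : ∀ z, 0 ≤ Λ k z y) :
    0 ≤ DDk S P Λ k x y :=
  sum_nonneg fun z _ => mul_nonneg (hP z) (hΛ z)

/-- Also when `Δ(x, y) = 0`, since then every summand of `Δ(x, y)` vanishes. -/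
lemma div_DDk_mul_DDk {k : ℕ} {x : S (k + 1)} {y : S k}
    (hP : ∀ z, 0 ≤ P (k + 1) x z) (hΛ : ∀ z, 0 ≤ Λ k z y) (z : S (k + 1)) :
    P (k + 1) x z * Λ k z y / DDk S P Λ k x y * DDk S P Λ k x y = P (k + 1) x z * Λ k z y := by
  rcases eq_or_ne (DDk S P Λ k x y) 0 with h | h
  · have hz := (sum_eq_zero_iff_of_nonneg fun z _ => mul_nonneg (hP z) (hΛ z)).mp h z
      (mem_univ z)
    rw [hz, zero_div, zero_mul]
  · exact div_mul_cancel₀ _ h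

/-- With nonnegative kernels the positivity condition in `seqPL` is redundant: a vanishing
`Δ` already makes the product vanish, as `a / 0 = 0`. -/
lemma seqPL_eq_prod {n : ℕ} (hP : ∀ k < n, ∀ x y, 0 ≤ P (k + 1) x y)
    (hΛ : ∀ k < n, ∀ x y, 0 ≤ Λ k x y) (X Y : Cfg S n) :
    seqPL S P Λ n X Y = P 0 (X 0) (Y 0) *
      ∏ k : Fin n, (P ((k : ℕ) + 1) (X k.succ) (Y k.succ) * Λ k (Y k.succ) (Y k.castSucc)
        / DDk S P Λ k (X k.succ) (Y k.castSucc)) := by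
  rw [seqPL, ite_eq_left_iff]
  simp only [not_forall, not_lt]
  rintro ⟨k, hk⟩
  have h0 : DDk S P Λ k (X k.succ) (Y k.castSucc) = 0 :=
    le_antisymm hk (DDk_nonneg (hP k k.2 _) fun z => hΛ k k.2 z _)
  rw [prod_eq_zero (mem_univ k) (by rw [h0, div_zero]), mul_zero]

lemma seqPL_snoc {n : ℕ} (hP : ∀ k < n + 1, ∀ x y, 0 ≤ P (k + 1) x y)
    (hΛ : ∀ k < n + 1, ∀ x y, 0 ≤ Λ k x y) (X : Cfg S n) (x : S (n + 1)) (Y : Cfg S (n + 1)) :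
    seqPL S P Λ (n + 1) (Fin.snoc X x) Y = seqPL S P Λ n X (Fin.init Y) *
      (P (n + 1) x (Y (Fin.last (n + 1))) * Λ n (Y (Fin.last (n + 1))) (Y (Fin.last n).castSucc)
        / DDk S P Λ n x (Y (Fin.last n).castSucc)) := by
  rw [seqPL_eq_prod hP hΛ, seqPL_eq_prod (fun k hk => hP k (by omega))
    (fun k hk => hΛ k (by omega)), Fin.prod_univ_castSucc, ← mul_assoc]
  simp only [Fin.succ_castSucc, Fin.succ_last, Fin.snoc_last, Fin.snoc_castSucc, Fin.init,
    Fin.val_castSucc, Fin.val_last]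
  rfl

theorem sum_linkedMeasure_mul_seqPL {n : ℕ} (hP : ∀ k < n, ∀ x y, 0 ≤ P (k + 1) x y)
    (hΛ : ∀ k < n, ∀ x y, 0 ≤ Λ k x y)
    (hint : ∀ k < n, ∀ x z, DDk S P Λ k x z = ∑ w, Λ k x w * P k w z)
    (μ : S n → ℝ) (Y : Cfg S n) :
    ∑ X, linkedMeasure Λ n μ X * seqPL S P Λ n X Y
      = (∑ x, μ x * P n x (Y (Fin.last n))) * ∏ k : Fin n, Λ k (Y k.succ) (Y k.castSucc) := by
  induction n with
  | zero =>
    simp only [linkedMeasure, univ_eq_empty, prod_empty, mul_one]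
    refine Fintype.sum_equiv (Equiv.piUnique fun k : Fin 1 => S k) _ _ fun X => ?_
    rw [seqPL_eq_prod nofun nofun, univ_eq_empty, prod_empty, mul_one]
    rfl
  | succ n ih =>
    set y := Y (Fin.last (n + 1))
    set y' := Y (Fin.last n).castSucc
    have hP' : ∀ k < n, ∀ x y, 0 ≤ P (k + 1) x y := fun k hk => hP k (by omega)
    have hΛ' : ∀ k < n, ∀ x y, 0 ≤ Λ k x y := fun k hk => hΛ k (by omega)
    have hint' : ∀ k < n, ∀ x z, DDk S P Λ k x z = ∑ w, Λ k x w * P k w z :=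
      fun k hk => hint k (by omega)
    rw [← (Fin.snocEquiv fun k : Fin (n + 2) => S k).sum_comp, Fintype.sum_prod_type]
    calc _ = ∑ x, μ x * (P (n + 1) x y * Λ n y y' / DDk S P Λ n x y') *
          ∑ X, linkedMeasure Λ n (Λ n x) X * seqPL S P Λ n X (Fin.init Y) := by
          refine sum_congr rfl fun x _ => ?_
          rw [mul_sum]
          refine sum_congr rfl fun X _ => ?_
          change linkedMeasure Λ (n + 1) μ (Fin.snoc X x) * seqPL S P Λ (n + 1) (Fin.snoc X x) Y = _
          rw [linkedMeasure_snoc, seqPL_snoc hP hΛ]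
          ring
      _ = ∑ x, μ x * (P (n + 1) x y * Λ n y y' / DDk S P Λ n x y' * DDk S P Λ n x y') *
          ∏ k : Fin n, Λ k (Y k.succ.castSucc) (Y k.castSucc.castSucc) := by
          refine sum_congr rfl fun x _ => ?_
          rw [ih hP' hΛ' hint', ← hint n n.lt_succ_self]
          simp only [Fin.init]
          ring
      _ = _ := by
          simp only [div_DDk_mul_DDk (hP n n.lt_succ_self _) (fun z => hΛ n n.lt_succ_self z y'),
            sum_mul, Fin.prod_univ_castSucc, Fin.succ_castSucc, Fin.succ_last, Fin.val_castSucc,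
            Fin.val_last]
          exact sum_congr rfl fun x _ => by ring

theorem conserved_measures_general (S : ℕ → Type) [∀ k, Fintype (S k)]
    (P : ∀ k, S k → S k → ℝ) (Λ : ∀ k, S (k + 1) → S k → ℝ) (n : ℕ)
    (hPpos : ∀ k ≤ n, ∀ x y, 0 ≤ P k x y)
    (hΛpos : ∀ k < n, ∀ x y, 0 ≤ Λ k x y)
    (hint : ∀ k < n, ∀ (x : S (k + 1)) (z : S k),
      ∑ y : S (k + 1), P (k + 1) x y * Λ k y z = ∑ w : S k, Λ k x w * P k w z)
    (μ : S n → ℝ)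
    (Y : Cfg S n) :
    ∑ X : Cfg S n,
        (μ (X (Fin.last n)) * ∏ k : Fin n, Λ k (X k.succ) (X k.castSucc)) * seqPL S P Λ n X Y
      = (∑ x : S n, μ x * P n x (Y (Fin.last n))) *
          ∏ k : Fin n, Λ k (Y k.succ) (Y k.castSucc) :=
  sum_linkedMeasure_mul_seqPL (fun k hk => hPpos (k + 1) hk) hΛpos hint μ Y

/-- Measures of the product form `M_n(X) = μ_n(xⁿ) ∏_k Λ(x^{k+1}, x^k)` are preserved by the
sequential-update dynamics `P^n_Λ`, the top marginal evolving by `P_n`: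
`(M_n P^n_Λ)(Y) = (μ_n P_n)(yⁿ) ∏_k Λ(y^{k+1}, y^k)`. -/
theorem conserved_measures (S : ℕ → Type) [∀ k, Fintype (S k)] [∀ k, Nonempty (S k)]
    (P : ∀ k, S k → S k → ℝ) (Λ : ∀ k, S (k + 1) → S k → ℝ) (n : ℕ)
    (hPpos : ∀ k ≤ n, ∀ x y, 0 ≤ P k x y)
    (hPsum : ∀ k ≤ n, ∀ x, ∑ y, P k x y = 1)
    (hΛpos : ∀ k < n, ∀ x y, 0 ≤ Λ k x y)
    (hΛsum : ∀ k < n, ∀ x, ∑ y, Λ k x y = 1)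
    (hint : ∀ k < n, ∀ (x : S (k + 1)) (z : S k),
      ∑ y : S (k + 1), P (k + 1) x y * Λ k y z = ∑ w : S k, Λ k x w * P k w z)
    (μ : S n → ℝ) (hμpos : ∀ x, 0 ≤ μ x) (hμsum : ∑ x, μ x = 1)
    (Y : Cfg S n) :
    ∑ X : Cfg S n,
        (μ (X (Fin.last n)) * ∏ k : Fin n, Λ k (X k.succ) (X k.castSucc)) * seqPL S P Λ n X Y
      = (∑ x : S n, μ x * P n x (Y (Fin.last n))) *
          ∏ k : Fin n, Λ k (Y k.succ) (Y k.castSucc) :=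
  conserved_measures_general S P Λ n hPpos hΛpos hint μ Y
end

section
/- (Macchi's theorem, finite algebraic form.) Let 𝔛 be a finite set and L an 𝔛 × 𝔛 matrix over ℝ (or ℂ) such that the matrix I + L is invertible, and set K = L(I + L)^{−1}. Then for every subset S ⊆ 𝔛: ∑_{X : S ⊆ X ⊆ 𝔛} det(L_X) = det(I + L) · det(K_S), where L_X denotes the submatrix of L with rows and columns indexed by X and K_S the submatrix of K indexed by S. In particular (taking S = ∅, using det(I+L) = ∑_X det L_X), if moreover det(L_X) ≥ 0 for all X, the L-ensemble P(X) = det(L_X)/det(I + L) is a determinantal point process with correlation kernel K = L(I+L)^{−1}. -/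
/-!
Expanding `det (M + diagonal d)` multilinearly in the rows gives
`∑_X det M_X * ∏_{i ∉ X} d i`; for `d` the indicator of `Sᶜ` this is the left-hand side.
On the other hand `L + diagonal d = P * (1 + L)`, where `P` has the rows of
`K = L (1 + L)⁻¹` on `S` and those of the identity off `S` (as `K (1 + L) = L`), and
`det P = det K_S`.
-/

namespace Matrix

variable {n R : Type*} [Fintype n] [DecidableEq n] [CommRing R]

theorem det_add_diagonal (M : Matrix n n R) (d : n → R) :
    det (M + diagonal d) =
      ∑ s : Finset n, (∏ i ∈ sᶜ, d i) * (M.submatrix (↑) (↑) : Matrix s s R).det := by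
  change detRowAlternating (fun i => M i + diagonal d i) = _
  rw [show (fun i => M i + diagonal d i) = M.row + (diagonal d).row from rfl,
    AlternatingMap.map_add_univ]
  refine Finset.sum_congr rfl fun s _ => ?_
  have hrows : s.piecewise M.row (diagonal d).row =
      fun i => (if i ∈ s then 1 else d i) • s.piecewise M.row (1 : Matrix n n R).row i := by
    funext i j
    by_cases hi : i ∈ s <;> simp [Finset.piecewise, hi, row, diagonal_apply, one_apply]
  rw [hrows, AlternatingMap.map_smul_univ, ← det_piecewise_one_eq_submatrix_det,
    Finset.prod_ite, Finset.prod_const_one, one_mul, Finset.filter_notMem_eq_sdiff,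
    ← Finset.compl_eq_univ_sdiff]
  rfl

theorem sum_det_submatrix_of_subset_eq_det_add_diagonal (M : Matrix n n R) (S : Finset n) :
    ∑ X ∈ Finset.univ.filter (S ⊆ ·), (M.submatrix (↑) (↑) : Matrix X X R).det =
      det (M + diagonal fun i => if i ∈ S then 0 else 1) := by
  rw [det_add_diagonal, Finset.sum_filter]
  refine Finset.sum_congr rfl fun X _ => ?_
  have hprod : (∏ i ∈ Xᶜ, if i ∈ S then (0 : R) else 1) = if S ⊆ X then 1 else 0 := by
    simp only [← ite_not (p := _ ∈ S), Finset.prod_boole,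
      ← Finset.disjoint_left, disjoint_compl_left_iff]
  rw [hprod, ite_mul, one_mul, zero_mul]

theorem of_piecewise_row_mul (S : Finset n) (A B N : Matrix n n R) :
    of (S.piecewise A.row B.row) * N = of (S.piecewise (A * N).row (B * N).row) := by
  ext i j
  by_cases hi : i ∈ S <;> simp [Finset.piecewise, hi, row, mul_apply]

theorem det_add_diagonal_eq_det_mul_det_submatrix {L : Matrix n n R} (hL : IsUnit (1 + L))
    (S : Finset n) :
    det (L + diagonal fun i => if i ∈ S then 0 else 1) =
      det (1 + L) * ((L * (1 + L)⁻¹).submatrix (↑) (↑) : Matrix S S R).det := by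
  have hK : L * (1 + L)⁻¹ * (1 + L) = L :=
    nonsing_inv_mul_cancel_right _ _ ((isUnit_iff_isUnit_det _).mp hL)
  have hfactor : L + diagonal (fun i => if i ∈ S then 0 else 1) =
      of (S.piecewise (L * (1 + L)⁻¹).row (1 : Matrix n n R).row) * (1 + L) := by
    rw [of_piecewise_row_mul, hK, one_mul]
    ext i j
    by_cases hi : i ∈ S <;> simp [Finset.piecewise, hi, row, diagonal_apply, one_apply, add_comm]
  rw [hfactor, det_mul, det_piecewise_one_eq_submatrix_det, mul_comm]

end Matrix

/-- Macchi's theorem (finite algebraic form): if `1 + L` is invertible and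
`K = L (1 + L)⁻¹`, then for every `S ⊆ 𝔛`,
`∑_{S ⊆ X ⊆ 𝔛} det(L_X) = det(1 + L) · det(K_S)`. In particular the `L`-ensemble
`P(X) = det(L_X)/det(1+L)` is determinantal with correlation kernel `K`. -/
theorem macchi_L_ensemble (α : Type) [Fintype α] [DecidableEq α]
    (L : Matrix α α ℝ) (hL : IsUnit (1 + L)) (S : Finset α) :
    ∑ X ∈ Finset.univ.filter (fun X : Finset α => S ⊆ X),
        (L.submatrix (fun i : X => (i : α)) (fun j : X => (j : α))).det
      = (1 + L).det *
        ((L * (1 + L)⁻¹).submatrix (fun i : S => (i : α)) (fun j : S => (j : α))).det := by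
  rw [Matrix.sum_det_submatrix_of_subset_eq_det_add_diagonal,
    Matrix.det_add_diagonal_eq_det_mul_det_submatrix hL]
end

section
/- Fix N ≥ 1 and define Ψ_i : ℤ → ℤ for 1 ≤ i ≤ N by Ψ_i(x) = (−1)^{x+i} · C(N−i, −x−i) when −N ≤ x ≤ −i (where C denotes the binomial coefficient) and Ψ_i(x) = 0 otherwise; equivalently Ψ_i(x) is the coefficient extraction (1/2πi)∮_{Γ_0} (1−z)^{N−i} z^{x+i−1} dz. Then for x^N ∈ W_N, the determinant det(Ψ_i(x_j^N))_{i,j=1}^N is nonzero if and only if x^N = (−N, −N+1, …, −1); in particular, the measure on W_N proportional to Δ_N(x^N) det(Ψ_i(x_j^N))_{i,j=1}^N is the Dirac delta measure at the packed configuration (−N, −N+1, …, −1). -/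
/-! Since `Ψ_i` vanishes outside `[-N, -i]`, a nonzero determinant forces every `x_j` into
`[-N, -1]`, and a strictly increasing `N`-tuple in an interval of `N` integers must fill it.
Conversely, at the packed configuration the column of `x_j = -i` has its last nonzero entry in
row `i`, where `Ψ_i(-i) = 1`, so after reversing the columns the matrix is unitriangular. -/

/-- The functions `Ψ_i(x) = (1/2πi) ∮ (1-z)^{N-i} z^{x+i-1} dz`, explicitly
`Ψ_i(x) = (-1)^{x+i} C(N-i, -x-i)` for `-N ≤ x ≤ -i` and `0` otherwise
(here written with the 0-based index `i : Fin N`, so `i` above is `i+1`). -/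
def PsiStep (N : ℕ) (i : Fin N) (x : ℤ) : ℤ :=
  if -(N : ℤ) ≤ x ∧ x ≤ -(i : ℤ) - 1 then
    ((x + (i : ℤ) + 1).negOnePow : ℤ) * ((N - 1 - (i : ℕ)).choose (-x - (i : ℤ) - 1).toNat)
  else 0

theorem StrictMono.eq_add_of_forall_mem_Ico {n : ℕ} {x : Fin n → ℤ} (hx : StrictMono x) (a : ℤ)
    (hmem : ∀ j, x j ∈ Set.Ico a (a + n)) (j : Fin n) : x j = a + j := by
  let f : Fin n → Fin n := fun k => ⟨(x k - a).toNat, by obtain ⟨_, _⟩ := hmem k; omega⟩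
  have hf : StrictMono f := fun k l hkl => by
    obtain ⟨_, _⟩ := hmem k
    have := hx hkl
    simp only [Fin.lt_def, f]
    omega
  have := congrArg Fin.val (hf.apply_eq (x := j))
  obtain ⟨_, _⟩ := hmem j
  simp only [f] at this
  omega

namespace PsiStep

variable {N : ℕ} {i : Fin N} {y : ℤ}

theorem mem_Icc_of_ne_zero (h : PsiStep N i y ≠ 0) : y ∈ Set.Icc (-(N : ℤ)) (-(i : ℤ) - 1) := by
  by_contra hy
  exact h (if_neg hy)

theorem eq_zero_of_lt (h : -(i : ℤ) - 1 < y) : PsiStep N i y = 0 := by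
  by_contra hne
  have := (mem_Icc_of_ne_zero hne).2
  omega

theorem apply_neg_sub_one : PsiStep N i (-(i : ℤ) - 1) = 1 := by
  have : -(N : ℤ) ≤ -(i : ℤ) - 1 := by omega
  have hexp : -(i : ℤ) - 1 + i + 1 = 0 := by ring
  simp [PsiStep, this, hexp]

theorem det_packed :
    (Matrix.of fun i j : Fin N => PsiStep N i ((j : ℤ) - N)).det =
      Equiv.Perm.sign (Fin.revPerm : Equiv.Perm (Fin N)) := by
  set M := Matrix.of fun i j : Fin N => PsiStep N i ((j : ℤ) - N)
  have hentry (i j : Fin N) : M.submatrix id Fin.revPerm i j = PsiStep N i (-(j : ℤ) - 1) := by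
    simp only [Matrix.submatrix_apply, id, Fin.revPerm_apply, M, Matrix.of_apply, Fin.val_rev]
    congr 1
    omega
  have htri : (M.submatrix id Fin.revPerm).IsUpperTriangular := fun i j (hji : j < i) => by
    rw [hentry]
    exact eq_zero_of_lt (by rw [Fin.lt_def] at hji; omega)
  have hunit : (M.submatrix id Fin.revPerm).det = 1 := by
    rw [Matrix.det_of_isUpperTriangular htri]
    exact Finset.prod_eq_one fun i _ => (hentry i i).trans apply_neg_sub_one
  calc M.det = ((M.submatrix id Fin.revPerm).submatrix id Fin.revPerm).det :=
        congrArg Matrix.det (by ext; simp)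
    _ = Equiv.Perm.sign Fin.revPerm := by rw [Matrix.det_permute', hunit, Int.cast_id, mul_one]

end PsiStep

theorem psi_det_packed_general (N : ℕ) (x : Fin N → ℤ) (hx : StrictMono x) :
    (Matrix.of fun i j : Fin N => PsiStep N i (x j)).det ≠ 0
      ↔ (∀ j : Fin N, x j = (j : ℤ) - (N : ℤ)) := by
  constructor
  · intro hdet j
    rw [hx.eq_add_of_forall_mem_Ico (-N) (fun k => ?_) j, neg_add_eq_sub]
    obtain ⟨i, hi⟩ : ∃ i, PsiStep N i (x k) ≠ 0 := by
      by_contra! hcol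
      exact hdet (Matrix.det_eq_zero_of_column_eq_zero k hcol)
    obtain ⟨hlo, hhi⟩ := PsiStep.mem_Icc_of_ne_zero hi
    constructor <;> omega
  · intro hpacked
    rw [funext hpacked, PsiStep.det_packed]
    exact Units.ne_zero _

/-- For strictly increasing `x ∈ W_N`, the determinant `det(Ψ_i(x_j))` is nonzero if and only
if `x` is the packed configuration `(-N, -N+1, …, -1)`; hence the measure on `W_N`
proportional to `Δ_N(x) det(Ψ_i(x_j))` is the Dirac delta at the packed configuration. -/
theorem psi_det_packed (N : ℕ) (hN : 1 ≤ N) (x : Fin N → ℤ) (hx : StrictMono x) :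
    (Matrix.of fun i j : Fin N => PsiStep N i (x j)).det ≠ 0
      ↔ (∀ j : Fin N, x j = (j : ℤ) - (N : ℤ)) :=
  psi_det_packed_general N x hx
end

section
/- (Toeplitz-like summation identity; Proposition A.1 for Laurent polynomials.) Let n ≥ 1, let α_1,…,α_n be nonzero real (or complex) numbers, and let f : ℤ → ℂ be finitely supported with generating Laurent polynomial F(z) = ∑_{m∈ℤ} f(m) z^m. Then for every x ∈ W_n: ∑_{y ∈ W_n} det(α_i^{y_j})_{i,j=1}^n · det(f(x_i − y_j))_{i,j=1}^n = F(α_1^{−1}) ⋯ F(α_n^{−1}) · det(α_i^{x_j})_{i,j=1}^n, where the sum over y ∈ W_n is finite (only finitely many y give a nonzero determinant, since f is finitely supported). -/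
/-- The generating Laurent polynomial `F(w) = ∑_m f(m) w^m` of a finitely supported
`f : ℤ → ℂ`. -/
noncomputable def laurentGen (f : ℤ →₀ ℂ) (w : ℂ) : ℂ :=
  ∑ m ∈ f.support, f m * w ^ m

/-!
The identity is Cauchy–Binet for the `n × ℤ` matrix `A i k = α_i ^ k` and the `ℤ × n` matrix
`B k j = f (x_j - k)`, both effectively finite because `f` is finitely supported. Reindexing
`k = x_j - m` gives `(A B) i j = F(α_i⁻¹) α_i ^ x_j`, so `det (A B)` is the right-hand side, while
Cauchy–Binet expands `det (A B)` as the sum over `y ∈ W_n` of the products of the minors of `A`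
and `B` on the columns, respectively rows, `y`, which is the left-hand side.
-/

open Finset Matrix Function Equiv

section CauchyBinet

variable {R κ : Type*} [CommRing R]

theorem Matrix.det_of_sum_mul_eq_sum_piFinset {ι : Type*} [Fintype ι] [DecidableEq ι]
    [DecidableEq κ] (A : Matrix ι κ R) (B : Matrix κ ι R) (S : Finset κ) :
    (of fun i j => ∑ k ∈ S, A i k * B k j).det =
      ∑ y ∈ Fintype.piFinset fun _ => S, (of fun i j => A i (y j)).det * ∏ j, B (y j) j := by
  have hcols : (of fun i j => ∑ k ∈ S, A i k * B k j)ᵀ =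
      fun j => ∑ k ∈ S, B k j • fun i => A i k := by
    ext j i
    simp [mul_comm]
  rw [← det_transpose, hcols]
  refine ((detRowAlternating : (ι → R) [⋀^ι]→ₗ[R] R).toMultilinearMap.map_sum_finset _ _).trans
    (sum_congr rfl fun y _ => ?_)
  rw [MultilinearMap.map_smul_univ, smul_eq_mul, mul_comm]
  exact congrArg (· * _) (det_transpose (of fun i j => A i (y j)))

variable {n : ℕ}

theorem Matrix.sum_perm_det_mul_prod_eq_det_mul_det (A : Matrix (Fin n) κ R)
    (B : Matrix κ (Fin n) R) (z : Fin n → κ) :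
    ∑ σ : Perm (Fin n), (of fun i j => A i ((z ∘ σ) j)).det * ∏ j, B ((z ∘ σ) j) j =
      (of fun i j => A i (z j)).det * (of fun i j => B (z i) j).det := by
  have hperm (σ : Perm (Fin n)) : (of fun i j => A i (z (σ j))).det =
      (Perm.sign σ : R) * (of fun i j => A i (z j)).det :=
    det_permute' σ (of fun i j => A i (z j))
  simp only [Function.comp_apply, hperm, det_apply (of fun i j => B (z i) j), mul_sum, of_apply,
    Units.smul_def, zsmul_eq_mul]
  exact sum_congr rfl fun σ _ => by ring

variable [LinearOrder κ]

theorem Finset.sum_filter_injective_eq_sum_strictMono_perm {M : Type*} [AddCommMonoid M]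
    (S : Finset κ) (g : (Fin n → κ) → M) :
    ∑ y ∈ (Fintype.piFinset fun _ => S).filter Injective, g y =
      ∑ z ∈ (Fintype.piFinset fun _ => S).filter StrictMono, ∑ σ : Perm (Fin n), g (z ∘ σ) := by
  rw [← sum_product']
  symm
  refine sum_bij (fun p _ => p.1 ∘ p.2) ?_ ?_ ?_ fun _ _ => rfl
  · rintro ⟨z, σ⟩ hp
    simp only [mem_product, mem_filter, Fintype.mem_piFinset] at hp ⊢
    exact ⟨fun j => hp.1.1 (σ j), hp.1.2.injective.comp σ.injective⟩
  · rintro ⟨z₁, σ₁⟩ h₁ ⟨z₂, σ₂⟩ h₂ (heq : z₁ ∘ σ₁ = z₂ ∘ σ₂)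
    have hm₁ := (mem_filter.1 (mem_product.1 h₁).1).2
    have hm₂ := (mem_filter.1 (mem_product.1 h₂).1).2
    obtain rfl : z₁ = z₂ := (hm₁.range_inj hm₂).1 <| by
      rw [← σ₁.surjective.range_comp z₁, heq, σ₂.surjective.range_comp]
    obtain rfl : σ₁ = σ₂ := Perm.ext fun j => hm₁.injective (congrFun heq j)
    rfl
  · intro y hy
    simp only [mem_filter, Fintype.mem_piFinset] at hy
    refine ⟨(y ∘ Tuple.sort y, (Tuple.sort y)⁻¹), ?_, ?_⟩
    · simp only [mem_product, mem_filter, Fintype.mem_piFinset, mem_univ, and_true]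
      exact ⟨fun j => hy.1 _,
        (Tuple.monotone_sort y).strictMono_of_injective (hy.2.comp (Tuple.sort y).injective)⟩
    · ext j
      simp

theorem Matrix.det_of_sum_mul_eq_sum_strictMono (A : Matrix (Fin n) κ R)
    (B : Matrix κ (Fin n) R) (S : Finset κ) :
    (of fun i j => ∑ k ∈ S, A i k * B k j).det =
      ∑ z ∈ (Fintype.piFinset fun _ => S).filter StrictMono,
        (of fun i j => A i (z j)).det * (of fun i j => B (z i) j).det := by
  have hnoninj : ∀ y ∈ Fintype.piFinset (fun _ => S), ¬ Injective y →
      (of fun i j => A i (y j)).det * ∏ j, B (y j) j = 0 := by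
    intro y _ hy
    obtain ⟨j₁, j₂, hval, hne⟩ : ∃ j₁ j₂, y j₁ = y j₂ ∧ j₁ ≠ j₂ := by
      simpa [Injective] using hy
    rw [det_zero_of_column_eq hne fun i => by simp [hval], zero_mul]
  rw [det_of_sum_mul_eq_sum_piFinset,
    ← sum_filter_of_ne fun y hy h => not_not.1 (mt (hnoninj y hy) h),
    sum_filter_injective_eq_sum_strictMono_perm]
  exact sum_congr rfl fun z _ => sum_perm_det_mul_prod_eq_det_mul_det A B z

end CauchyBinet

theorem sum_zpow_mul_apply_sub_eq_laurentGen (f : ℤ →₀ ℂ) {a : ℂ} (ha : a ≠ 0) (c : ℤ)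
    {S : Finset ℤ} (hS : ∀ k, f (c - k) ≠ 0 → k ∈ S) :
    ∑ k ∈ S, a ^ k * f (c - k) = laurentGen f a⁻¹ * a ^ c := by
  have hreindex : ∑ k ∈ S, a ^ k * f (c - k) = ∑ m ∈ S.image (c - ·), f m * a ^ (c - m) := by
    rw [sum_image fun _ _ _ _ h => sub_right_injective h]
    simp only [sub_sub_cancel, mul_comm]
  have hsupp : f.support ⊆ S.image (c - ·) := fun m hm =>
    mem_image.2 ⟨c - m, hS _ (by simpa using Finsupp.mem_support_iff.1 hm), sub_sub_cancel c m⟩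
  rw [hreindex, ← sum_subset hsupp fun m _ hm => by simp [Finsupp.notMem_support_iff.1 hm],
    laurentGen, sum_mul]
  refine sum_congr rfl fun m _ => ?_
  rw [_root_.inv_zpow', mul_assoc, ← zpow_add₀ ha, neg_add_eq_sub]

theorem toeplitz_like_sum_general (n : ℕ) (α : Fin n → ℂ) (hα : ∀ i, α i ≠ 0)
    (f : ℤ →₀ ℂ) (x : Fin n → ℤ) :
    ∑ᶠ y ∈ {y : Fin n → ℤ | StrictMono y},
        (Matrix.of fun i j : Fin n => α i ^ y j).det *
          (Matrix.of fun i j : Fin n => f (x i - y j)).det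
      = (∏ i : Fin n, laurentGen f (α i)⁻¹) *
          (Matrix.of fun i j : Fin n => α i ^ x j).det := by
  classical
  set S : Finset ℤ := univ.biUnion fun i => f.support.image (x i - ·)
  have hS (i : Fin n) (k : ℤ) (hk : f (x i - k) ≠ 0) : k ∈ S :=
    mem_biUnion.2 ⟨i, mem_univ _, mem_image.2 ⟨_, Finsupp.mem_support_iff.2 hk, sub_sub_cancel _ _⟩⟩
  have hsupp (y : Fin n → ℤ) (hy : (of fun i j => f (x i - y j)).det ≠ 0) (j : Fin n) : y j ∈ S :=
    by_contra fun hj =>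
      hy <| det_eq_zero_of_column_eq_zero j fun i => by_contra fun h => hj (hS i _ h)
  have hentries (i j : Fin n) :
      ∑ k ∈ S, α i ^ k * f (x j - k) = laurentGen f (α i)⁻¹ * α i ^ x j :=
    sum_zpow_mul_apply_sub_eq_laurentGen f (hα i) (x j) (hS j)
  calc _ = ∑ y ∈ (Fintype.piFinset fun _ => S).filter StrictMono,
          (of fun i j => α i ^ y j).det * (of fun i j => f (x i - y j)).det := by
        refine finsum_mem_eq_sum_of_inter_support_eq _ (Set.ext fun y => ?_)
        simp only [Set.mem_inter_iff, Set.mem_ofPred_eq, mem_support, coe_filter,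
          Fintype.mem_piFinset]
        exact ⟨fun h => ⟨⟨hsupp y (right_ne_zero_of_mul h.2), h.1⟩, h.2⟩, fun h => ⟨h.1.2, h.2⟩⟩
    _ = (of fun i j => ∑ k ∈ S, α i ^ k * f (x j - k)).det := by
        refine .trans ?_ (det_of_sum_mul_eq_sum_strictMono (fun i k => α i ^ k)
          (fun k j => f (x j - k)) S).symm
        exact sum_congr rfl fun y _ => congrArg (_ * ·) (det_transpose _).symm
    _ = _ := by simp only [hentries]; exact det_mul_column _ _

/-- Toeplitz-like summation identity (Proposition A.1 for Laurent polynomials):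
for nonzero `α_1, …, α_n` and finitely supported `f` with Laurent polynomial `F`,
`∑_{y ∈ W_n} det(α_i^{y_j}) det(f(x_i - y_j)) = F(α_1⁻¹) ⋯ F(α_n⁻¹) det(α_i^{x_j})`
for every `x ∈ W_n`. -/
theorem toeplitz_like_sum (n : ℕ) (hn : 1 ≤ n) (α : Fin n → ℂ) (hα : ∀ i, α i ≠ 0)
    (f : ℤ →₀ ℂ) (x : Fin n → ℤ) (hx : StrictMono x) :
    ∑ᶠ y ∈ {y : Fin n → ℤ | StrictMono y},
        (Matrix.of fun i j : Fin n => α i ^ y j).det *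
          (Matrix.of fun i j : Fin n => f (x i - y j)).det
      = (∏ i : Fin n, laurentGen f (α i)⁻¹) *
          (Matrix.of fun i j : Fin n => α i ^ x j).det :=
  toeplitz_like_sum_general n α hα f x
end

section
/- (Toeplitz-like summation identity with a virtual variable; Proposition A.2 for Laurent polynomials.) Let n ≥ 2, let α_1,…,α_n be nonzero real (or complex) numbers, and let f : ℤ → ℂ be finitely supported with generating Laurent polynomial F(z) = ∑_{m∈ℤ} f(m) z^m. For x ∈ W_n and y ∈ W_{n−1}, let M(x,y) be the n×n matrix with M_{i,j} = f(x_i − y_j) for 1 ≤ j ≤ n−1 and M_{i,n} = α_n^{x_i} (the virtual column, f(x − virt) := α_n^x). Then for every x ∈ W_n: ∑_{y ∈ W_{n−1}} det(α_i^{y_j})_{i,j=1}^{n−1} · det(M(x,y)) = F(α_1^{−1}) ⋯ F(α_{n−1}^{−1}) · det(α_i^{x_j})_{i,j=1}^n, the sum over y ∈ W_{n−1} being finite. -/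
open Finset Function

namespace AlternatingMap

section fixLast

variable {R M N : Type*} [CommSemiring R] [AddCommMonoid M] [Module R M] [AddCommMonoid N]
  [Module R N] {n : ℕ}

def fixLast (g : M [⋀^Fin (n + 1)]→ₗ[R] N) (x : M) : M [⋀^Fin n]→ₗ[R] N where
  toMultilinearMap := (LinearMap.applyₗ x).compMultilinearMap g.toMultilinearMap.curryRight
  map_eq_zero_of_eq' v i j hv hij := by
    show g (Fin.snoc v x) = 0
    exact g.map_eq_zero_of_eq _ (by simpa using hv) (Fin.castSucc_injective _ |>.ne hij)

@[simp]
theorem fixLast_apply (g : M [⋀^Fin (n + 1)]→ₗ[R] N) (x : M) (v : Fin n → M) :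
    g.fixLast x v = g (Fin.snoc v x) :=
  rfl

end fixLast

theorem det_smul_eq_sum_perm {R M N n : Type*} [CommRing R] [AddCommGroup M] [Module R M]
    [AddCommGroup N] [Module R N] [Fintype n] [DecidableEq n] (g : M [⋀^n]→ₗ[R] N)
    (A : Matrix n n R) (v : n → M) :
    A.det • g v = ∑ σ : Equiv.Perm n, (∏ i, A i (σ i)) • g (v ∘ σ) := by
  rw [← Matrix.det_transpose, Matrix.det_apply, Finset.sum_smul]
  refine Finset.sum_congr rfl fun σ _ => ?_
  rw [g.map_perm, smul_assoc, smul_comm]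
  rfl

end AlternatingMap

theorem Tuple.sort_comp_perm_of_strictMono {ι : Type*} [LinearOrder ι] {m : ℕ} {y : Fin m → ι}
    (hy : StrictMono y) (σ : Equiv.Perm (Fin m)) : Tuple.sort (y ∘ σ) = σ⁻¹ := by
  refine (Tuple.eq_sort_iff.2 ⟨?_, fun i j hlt hij => ?_⟩).symm
  · simpa [Function.comp_assoc] using hy.monotone
  · exact absurd (by simpa [hy.injective.eq_iff] using hij) hlt.ne

theorem Finset.sum_injective_eq_sum_strictMono_sum_perm {ι N : Type*} [LinearOrder ι]
    [AddCommMonoid N] {m : ℕ} (T : Finset ι) (F : (Fin m → ι) → N) :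
    ∑ y ∈ Fintype.piFinset (fun _ => T) with Injective y, F y
      = ∑ y ∈ Fintype.piFinset (fun _ => T) with StrictMono y,
          ∑ σ : Equiv.Perm (Fin m), F (y ∘ σ) := by
  rw [← Finset.sum_product']
  refine (Finset.sum_nbij' (fun p : (Fin m → ι) × Equiv.Perm (Fin m) => p.1 ∘ p.2)
    (fun z => (z ∘ Tuple.sort z, (Tuple.sort z)⁻¹)) ?_ ?_ ?_ ?_ fun _ _ => rfl).symm
  · rintro ⟨y, σ⟩ hp
    simp only [mem_product, mem_filter, Fintype.mem_piFinset] at hp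
    simp only [mem_filter, Fintype.mem_piFinset, comp_apply]
    exact ⟨fun j => hp.1.1 _, hp.1.2.injective.comp σ.injective⟩
  · intro z hz
    simp only [mem_filter, Fintype.mem_piFinset] at hz
    simp only [mem_product, mem_filter, Fintype.mem_piFinset, comp_apply, mem_univ, and_true]
    exact ⟨fun j => hz.1 _,
      (Tuple.monotone_sort z).strictMono_of_injective (hz.2.comp (Equiv.injective _))⟩
  · rintro ⟨y, σ⟩ hp
    simp only [mem_product, mem_filter] at hp
    simp [Tuple.sort_comp_perm_of_strictMono hp.1.2, Function.comp_assoc]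
  · intro z _
    simp [Function.comp_assoc]

namespace AlternatingMap

variable {R M N ι : Type*} [CommRing R] [AddCommGroup M] [Module R M] [AddCommGroup N]
  [Module R N] [LinearOrder ι] {m : ℕ}

theorem sum_strictMono_det_smul (g : M [⋀^Fin m]→ₗ[R] N) (a : Fin m → ι → R) (c : ι → M)
    (T : Finset ι) :
    ∑ y ∈ Fintype.piFinset (fun _ => T) with StrictMono y,
        (Matrix.of fun i j => a i (y j)).det • g (c ∘ y)
      = g fun j => ∑ t ∈ T, a j t • c t := by
  have hexpand : (g fun j => ∑ t ∈ T, a j t • c t)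
      = ∑ y ∈ Fintype.piFinset (fun _ => T), (∏ j, a j (y j)) • g (c ∘ y) := by
    simp_rw [← g.map_smul_univ]
    exact g.toMultilinearMap.map_sum_finset (fun j t => a j t • c t) (fun _ => T)
  have hinj : ∑ y ∈ Fintype.piFinset (fun _ => T) with Injective y, (∏ j, a j (y j)) • g (c ∘ y)
      = ∑ y ∈ Fintype.piFinset (fun _ => T), (∏ j, a j (y j)) • g (c ∘ y) :=
    Finset.sum_filter_of_ne fun y _ hy => by
      by_contra hinj
      exact hy (by rw [g.map_eq_zero_of_not_injective _ fun h => hinj h.of_comp, smul_zero])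
  rw [hexpand, ← hinj, sum_injective_eq_sum_strictMono_sum_perm]
  exact Finset.sum_congr rfl fun y _ => det_smul_eq_sum_perm g _ (c ∘ y)

theorem finsum_strictMono_det_smul (g : M [⋀^Fin m]→ₗ[R] N) (a : Fin m → ι → R) (c : ι → M)
    (T : Finset ι) (hc : ∀ t ∉ T, c t = 0) :
    ∑ᶠ y ∈ {y : Fin m → ι | StrictMono y}, (Matrix.of fun i j => a i (y j)).det • g (c ∘ y)
      = g fun j => ∑ t ∈ T, a j t • c t := by
  rw [← sum_strictMono_det_smul]
  refine finsum_mem_eq_sum_of_subset _ (fun y ⟨hy, hne⟩ => ?_) fun y hy => (mem_filter.1 hy).2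
  refine mem_filter.2 ⟨Fintype.mem_piFinset.2 fun j => ?_, hy⟩
  by_contra hj
  exact hne (by dsimp only; rw [g.map_coord_zero j (hc _ hj), smul_zero])

end AlternatingMap

theorem Matrix.det_of_dite_eq_detRowAlternating_fixLast {R : Type*} [CommRing R] {m : ℕ}
    (c : Fin m → Fin (m + 1) → R) (v : Fin (m + 1) → R) :
    (Matrix.of fun i j : Fin (m + 1) => if h : (j : ℕ) < m then c ⟨j, h⟩ i else v i).det
      = Matrix.detRowAlternating.fixLast v c := by
  rw [AlternatingMap.fixLast_apply, ← Matrix.det_transpose]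
  congr 1
  ext i j
  simp only [Matrix.transpose_apply, Matrix.of_apply, Fin.snoc, cast_eq]
  split <;> rfl

theorem sum_zpow_mul_eq_laurentGen_inv_mul (f : ℤ →₀ ℂ) {β : ℂ} (hβ : β ≠ 0) (x : ℤ)
    {T : Finset ℤ} (hT : ∀ t ∉ T, f (x - t) = 0) :
    ∑ t ∈ T, β ^ t * f (x - t) = laurentGen f β⁻¹ * β ^ x := by
  have hsub : f.support.image (x - ·) ⊆ T := by
    intro t ht
    obtain ⟨s, hs, rfl⟩ := mem_image.1 ht
    by_contra h
    exact Finsupp.mem_support_iff.1 hs (by simpa using hT _ h)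
  have hzero : ∀ t ∈ T, t ∉ f.support.image (x - ·) → β ^ t * f (x - t) = 0 := by
    intro t _ ht
    rw [Finsupp.notMem_support_iff.1 fun hs => ht (mem_image.2 ⟨x - t, hs, sub_sub_cancel x t⟩),
      mul_zero]
  rw [← sum_subset hsub hzero, sum_image sub_right_injective.injOn, laurentGen, sum_mul]
  refine sum_congr rfl fun s _ => ?_
  rw [sub_sub_cancel, zpow_sub₀ hβ, inv_zpow]
  ring

theorem toeplitz_like_sum_virtual_general (m : ℕ)
    (α : Fin (m + 1) → ℂ) (hα : ∀ i, α i ≠ 0)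
    (f : ℤ →₀ ℂ) (x : Fin (m + 1) → ℤ) :
    ∑ᶠ y ∈ {y : Fin m → ℤ | StrictMono y},
        (Matrix.of fun i j : Fin m => α i.castSucc ^ y j).det *
          (Matrix.of fun i j : Fin (m + 1) =>
            if h : (j : ℕ) < m then f (x i - y ⟨j, h⟩) else α (Fin.last m) ^ x i).det
      = (∏ i : Fin m, laurentGen f (α i.castSucc)⁻¹) *
          (Matrix.of fun i j : Fin (m + 1) => α i ^ x j).det := by
  set T := image₂ (fun i s => x i - s) univ f.support
  have hT : ∀ i, ∀ t ∉ T, f (x i - t) = 0 := fun i t ht =>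
    Finsupp.notMem_support_iff.1 fun hs =>
      ht (mem_image₂.2 ⟨i, mem_univ _, _, hs, sub_sub_cancel _ _⟩)
  set column : ℤ → Fin (m + 1) → ℂ := fun t i => f (x i - t)
  set Φ := Matrix.detRowAlternating.fixLast fun i => α (Fin.last m) ^ x i
  have hM : ∀ y : Fin m → ℤ, (Matrix.of fun i j : Fin (m + 1) =>
      if h : (j : ℕ) < m then f (x i - y ⟨j, h⟩) else α (Fin.last m) ^ x i).det = Φ (column ∘ y) :=
    fun y => Matrix.det_of_dite_eq_detRowAlternating_fixLast (column ∘ y) _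
  have hcolumn : (fun j : Fin m => ∑ t ∈ T, α j.castSucc ^ t • column t)
      = fun j => laurentGen f (α j.castSucc)⁻¹ • fun i => α j.castSucc ^ x i := by
    ext j i
    simpa [column] using sum_zpow_mul_eq_laurentGen_inv_mul f (hα _) (x i) (hT i)
  have hsnoc : Fin.snoc (fun j i => α j.castSucc ^ x i) (fun i => α (Fin.last m) ^ x i)
      = fun j i => α j ^ x i :=
    Fin.snoc_init_self (fun j i => α j ^ x i)
  simp_rw [hM, ← smul_eq_mul]
  rw [AlternatingMap.finsum_strictMono_det_smul Φ (fun j t => α j.castSucc ^ t) column T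
    fun t ht => funext fun i => hT i t ht, hcolumn, AlternatingMap.map_smul_univ,
    AlternatingMap.fixLast_apply, hsnoc]
  rfl

/-- Toeplitz-like summation identity with a virtual variable (Proposition A.2 for Laurent
polynomials): for `n = m+1 ≥ 2`, nonzero `α_1, …, α_n`, finitely supported `f` with Laurent
polynomial `F`, `x ∈ W_n`, and `M(x,y)` the `n × n` matrix whose first `n-1` columns are
`f(x_i - y_j)` and whose last (virtual) column is `α_n^{x_i}`:
`∑_{y ∈ W_{n-1}} det(α_i^{y_j})_{i,j≤n-1} det(M(x,y)) = F(α_1⁻¹)⋯F(α_{n-1}⁻¹) det(α_i^{x_j})`. -/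
theorem toeplitz_like_sum_virtual (m : ℕ) (hm : 1 ≤ m)
    (α : Fin (m + 1) → ℂ) (hα : ∀ i, α i ≠ 0)
    (f : ℤ →₀ ℂ) (x : Fin (m + 1) → ℤ) (hx : StrictMono x) :
    ∑ᶠ y ∈ {y : Fin m → ℤ | StrictMono y},
        (Matrix.of fun i j : Fin m => α i.castSucc ^ y j).det *
          (Matrix.of fun i j : Fin (m + 1) =>
            if h : (j : ℕ) < m then f (x i - y ⟨j, h⟩) else α (Fin.last m) ^ x i).det
      = (∏ i : Fin m, laurentGen f (α i.castSucc)⁻¹) *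
          (Matrix.of fun i j : Fin (m + 1) => α i ^ x j).det :=
  toeplitz_like_sum_virtual_general m α hα f x
end
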